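/- arXiv:2312.08639 — 7 statements merged into one kernel-verified Lean document; each statement's English description precedes it below -/
import Mathlib

section
/- Let G and H be simple graphs with |E(H)| ≥ 6, and suppose the maximum degree of G is at most 2·δ(H) − ⌊|E(H)|/3⌋. Then the H-edge-conflict graph of G is claw-free; that is, there do not exist four subgraphs H*, H₁, H₂, H₃ of G, each isomorphic to H, such that H* shares an edge with each of H₁, H₂, H₃, but H₁, H₂, H₃ are pairwise edge-disjoint. -/
/-!
If two copies `A`, `B` of `H` in `G` share an edge `uv`, then at each endpoint `w` the two copies
have at least `2δ(H) - Δ(G) ≥ ⌊|E(H)|/3⌋ =: k` common neighbours, hence at least `k` common edges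
at `u` and `k` at `v`, and so at least `2k - 1` common edges in total. Three pairwise edge-disjoint
copies each meeting a fourth copy `H*` would thus use `3(2k - 1)` of the `|E(H)| ≤ 3k + 2` edges
of `H*`, which is impossible once `k ≥ 2`, i.e. `|E(H)| ≥ 6`.
-/

open SimpleGraph

namespace Set

theorem ncard_inter_add_ncard_inter_add_ncard_inter_le {α : Type*} {s a b c : Set α}
    (hs : s.Finite) (hab : Disjoint a b) (hac : Disjoint a c) (hbc : Disjoint b c) :
    (s ∩ a).ncard + (s ∩ b).ncard + (s ∩ c).ncard ≤ s.ncard := by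
  have hfin : ∀ t : Set α, (s ∩ t).Finite := fun t ↦ hs.inter_of_left t
  rw [← ncard_union_eq (hab.mono inter_subset_right inter_subset_right) (hfin a) (hfin b),
    ← inter_union_distrib_left,
    ← ncard_union_eq ((disjoint_union_left.2 ⟨hac, hbc⟩).mono inter_subset_right
      inter_subset_right) (hfin _) (hfin c), ← inter_union_distrib_left]
  exact ncard_le_ncard inter_subset_left hs

end Set

namespace SimpleGraph

variable {V W : Type*} {G : SimpleGraph V}

theorem ncard_neighborSet_add_ncard_neighborSet_le [Finite V] {u v : V} (h : G.Adj u v) :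
    (G.neighborSet u).ncard + (G.neighborSet v).ncard ≤ G.edgeSet.ncard + 1 := by
  have hinc : ∀ w, (G.neighborSet w).ncard = (G.incidenceSet w).ncard := fun w ↦ by
    classical
    rw [← Nat.card_coe_set_eq, ← Nat.card_coe_set_eq,
      Nat.card_congr (G.incidenceSetEquivNeighborSet w)]
  calc (G.neighborSet u).ncard + (G.neighborSet v).ncard
      = (G.incidenceSet u ∪ G.incidenceSet v).ncard
        + (G.incidenceSet u ∩ G.incidenceSet v).ncard := by
        rw [hinc, hinc, Set.ncard_union_add_ncard_inter _ _ (Set.toFinite _) (Set.toFinite _)]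
    _ ≤ G.edgeSet.ncard + 1 := by
        rw [G.incidenceSet_inter_incidenceSet_of_adj h, Set.ncard_singleton]
        exact Nat.add_le_add_right (Set.ncard_le_ncard
          (Set.union_subset (G.incidenceSet_subset u) (G.incidenceSet_subset v))) 1

theorem ncard_neighborSet_le_maxDegree [Fintype V] [DecidableRel G.Adj] (v : V) :
    (G.neighborSet v).ncard ≤ G.maxDegree := by
  rw [Set.ncard_eq_toFinset_card', ← neighborFinset_def, card_neighborFinset_eq_degree]
  exact G.degree_le_maxDegree v

namespace Subgraph

theorem ncard_neighborSet_add_ncard_neighborSet_le [Finite V] (A B : G.Subgraph) (w : V) :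
    (A.neighborSet w).ncard + (B.neighborSet w).ncard
      ≤ (A.neighborSet w ∩ B.neighborSet w).ncard + (G.neighborSet w).ncard := by
  rw [← Set.ncard_union_add_ncard_inter _ _ (Set.toFinite _) (Set.toFinite _), add_comm]
  exact Nat.add_le_add_left (Set.ncard_le_ncard
    (Set.union_subset (A.neighborSet_subset w) (B.neighborSet_subset w))) _

theorem ncard_inter_edgeSet_add_one_ge [Finite V] {A B : G.Subgraph} {d D : ℕ}
    (hA : ∀ w ∈ A.verts, d ≤ (A.neighborSet w).ncard)
    (hB : ∀ w ∈ B.verts, d ≤ (B.neighborSet w).ncard)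
    (hG : ∀ w, (G.neighborSet w).ncard ≤ D) {u v : V} (huvA : A.Adj u v) (huvB : B.Adj u v) :
    2 * (2 * d - D) ≤ (A.edgeSet ∩ B.edgeSet).ncard + 1 := by
  have common : ∀ w, w ∈ A.verts → w ∈ B.verts →
      2 * d - D ≤ ((A ⊓ B).spanningCoe.neighborSet w).ncard := fun w hwA hwB ↦ by
    have hunion := A.ncard_neighborSet_add_ncard_neighborSet_le B w
    have hAw := hA w hwA
    have hBw := hB w hwB
    have hGw := hG w
    change _ ≤ ((A ⊓ B).neighborSet w).ncard
    rw [neighborSet_inf]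
    omega
  have hu := common u huvA.fst_mem huvB.fst_mem
  have hv := common v huvA.snd_mem huvB.snd_mem
  have hedges := SimpleGraph.ncard_neighborSet_add_ncard_neighborSet_le
    (G := (A ⊓ B).spanningCoe) (show (A ⊓ B).Adj u v from ⟨huvA, huvB⟩)
  rw [edgeSet_spanningCoe, edgeSet_inf] at hedges
  omega

variable {H : SimpleGraph W}

theorem ncard_neighborSet_eq_degree_of_iso [Fintype W] [DecidableRel H.Adj] {A : G.Subgraph}
    (f : A.coe ≃g H) {u : V} (hu : u ∈ A.verts) :
    (A.neighborSet u).ncard = H.degree (f ⟨u, hu⟩) := by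
  rw [← card_neighborSet_eq_degree, ← Nat.card_eq_fintype_card, ← Nat.card_coe_set_eq]
  exact Nat.card_congr ((coeNeighborSetEquiv ⟨u, hu⟩).symm.trans (f.mapNeighborSet ⟨u, hu⟩))

theorem ncard_edgeSet_eq_of_iso {A : G.Subgraph} (f : A.coe ≃g H) :
    A.edgeSet.ncard = H.edgeSet.ncard := by
  rw [← image_coe_edgeSet_coe, Set.ncard_image_of_injective _
    (Sym2.map.injective Subtype.val_injective), ← Nat.card_coe_set_eq, ← Nat.card_coe_set_eq,
    Nat.card_congr f.mapEdgeSet]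

theorem ncard_inter_edgeSet_add_one_ge_of_iso [Fintype V] [DecidableRel G.Adj] [Fintype W]
    [DecidableRel H.Adj] {A B : G.Subgraph} (fA : A.coe ≃g H) (fB : B.coe ≃g H)
    (hAB : (A.edgeSet ∩ B.edgeSet).Nonempty) :
    2 * (2 * H.minDegree - G.maxDegree) ≤ (A.edgeSet ∩ B.edgeSet).ncard + 1 := by
  obtain ⟨e, heA, heB⟩ := hAB
  induction e using Sym2.ind with | h u v =>
  have minDegree_le : ∀ {C : G.Subgraph}, (C.coe ≃g H) → ∀ w ∈ C.verts,
      H.minDegree ≤ (C.neighborSet w).ncard := fun f w hw ↦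
    (ncard_neighborSet_eq_degree_of_iso f hw).symm ▸ H.minDegree_le_degree _
  exact ncard_inter_edgeSet_add_one_ge (minDegree_le fA) (minDegree_le fB)
    G.ncard_neighborSet_le_maxDegree heA heB

end Subgraph

end SimpleGraph

theorem edge_conflict_claw_free_general
    {V W : Type*} [Fintype V] [Fintype W]
    (G : SimpleGraph V) (H : SimpleGraph W)
    [DecidableRel G.Adj] [DecidableRel H.Adj]
    (hE : 6 ≤ H.edgeFinset.card)
    (hdeg : (G.maxDegree : ℤ) ≤ 2 * (H.minDegree : ℤ) - ((H.edgeFinset.card / 3 : ℕ) : ℤ)) :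
    ¬ ∃ (Hs H1 H2 H3 : G.Subgraph),
        Nonempty (Hs.coe ≃g H) ∧ Nonempty (H1.coe ≃g H) ∧
        Nonempty (H2.coe ≃g H) ∧ Nonempty (H3.coe ≃g H) ∧
        (Hs.edgeSet ∩ H1.edgeSet).Nonempty ∧
        (Hs.edgeSet ∩ H2.edgeSet).Nonempty ∧
        (Hs.edgeSet ∩ H3.edgeSet).Nonempty ∧
        Disjoint H1.edgeSet H2.edgeSet ∧
        Disjoint H1.edgeSet H3.edgeSet ∧
        Disjoint H2.edgeSet H3.edgeSet := by
  rintro ⟨Hs, H1, H2, H3, ⟨fs⟩, ⟨f1⟩, ⟨f2⟩, ⟨f3⟩, hs1, hs2, hs3, h12, h13, h23⟩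
  have k1 := Subgraph.ncard_inter_edgeSet_add_one_ge_of_iso fs f1 hs1
  have k2 := Subgraph.ncard_inter_edgeSet_add_one_ge_of_iso fs f2 hs2
  have k3 := Subgraph.ncard_inter_edgeSet_add_one_ge_of_iso fs f3 hs3
  have hsum := Set.ncard_inter_add_ncard_inter_add_ncard_inter_le Hs.edgeSet.toFinite h12 h13 h23
  rw [Subgraph.ncard_edgeSet_eq_of_iso fs, ← coe_edgeFinset, Set.ncard_coe_finset] at hsum
  omega

/-- If `|E(H)| ≥ 6` and `Δ(G) ≤ 2·δ(H) − ⌊|E(H)|/3⌋` (as integers),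
then the `H`-edge-conflict graph of `G` is claw-free: there are no subgraphs
`Hs, H1, H2, H3` of `G`, each isomorphic to `H`, with `Hs` sharing an edge with
each `Hᵢ` while `H1, H2, H3` are pairwise edge-disjoint. -/
theorem edge_conflict_claw_free
    {V W : Type*} [Fintype V] [Fintype W] [Nonempty W] [DecidableEq W]
    (G : SimpleGraph V) (H : SimpleGraph W)
    [DecidableRel G.Adj] [DecidableRel H.Adj]
    (hE : 6 ≤ H.edgeFinset.card)
    (hdeg : (G.maxDegree : ℤ) ≤ 2 * (H.minDegree : ℤ) - ((H.edgeFinset.card / 3 : ℕ) : ℤ)) :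
    ¬ ∃ (Hs H1 H2 H3 : G.Subgraph),
        Nonempty (Hs.coe ≃g H) ∧ Nonempty (H1.coe ≃g H) ∧
        Nonempty (H2.coe ≃g H) ∧ Nonempty (H3.coe ≃g H) ∧
        (Hs.edgeSet ∩ H1.edgeSet).Nonempty ∧
        (Hs.edgeSet ∩ H2.edgeSet).Nonempty ∧
        (Hs.edgeSet ∩ H3.edgeSet).Nonempty ∧
        Disjoint H1.edgeSet H2.edgeSet ∧
        Disjoint H1.edgeSet H3.edgeSet ∧
        Disjoint H2.edgeSet H3.edgeSet :=
  edge_conflict_claw_free_general G H hE hdeg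
end

section
/- Let G be a simple graph with maximum degree at most 3, and fix ℓ ∈ {4,5}. Then the C_ℓ-vertex-conflict graph of G is claw-free: there is no copy C* of the ℓ-cycle in G together with three pairwise vertex-disjoint copies C₁, C₂, C₃ of the ℓ-cycle, each sharing a vertex with C*. -/
/-!
In a graph of maximum degree at most 3, two cycles through a common vertex `v` contribute
two neighbours of `v` each, so they share an edge at `v` and hence at least two vertices.
Thus each of `C₁, C₂, C₃` meets `C*` in at least two vertices, and these three intersections
are pairwise disjoint, which is impossible when `C*` has at most five vertices.
-/

open SimpleGraph

namespace SimpleGraph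

variable {V W : Type*}

theorem ncard_neighborSet_eq_degree (G : SimpleGraph V) (v : V) [Fintype (G.neighborSet v)] :
    (G.neighborSet v).ncard = G.degree v := by
  rw [Set.ncard_eq_toFinset_card', ← card_neighborSet_eq_degree, Set.toFinset_card]

theorem ncard_neighborSet_cycleGraph {n : ℕ} (v : Fin (n + 3)) :
    ((cycleGraph (n + 3)).neighborSet v).ncard = 2 := by
  rw [ncard_neighborSet_eq_degree, cycleGraph_degree_three_le]

theorem Iso.ncard_neighborSet {G : SimpleGraph V} {H : SimpleGraph W} (f : G ≃g H) (v : V) :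
    (H.neighborSet (f v)).ncard = (G.neighborSet v).ncard := by
  rw [← f.image_neighborSet, Set.ncard_image_of_injective _ f.injective]

theorem Subgraph.ncard_coe_neighborSet {G : SimpleGraph V} (G' : G.Subgraph) (v : G'.verts) :
    (G'.coe.neighborSet v).ncard = (G'.neighborSet v).ncard :=
  Set.ncard_congr' (G'.coeNeighborSetEquiv v)

theorem Subgraph.ncard_neighborSet_of_iso_cycleGraph {G : SimpleGraph V} {C : G.Subgraph} {n : ℕ}
    (e : C.coe ≃g cycleGraph (n + 3)) {v : V} (hv : v ∈ C.verts) :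
    (C.neighborSet v).ncard = 2 := by
  rw [← C.ncard_coe_neighborSet ⟨v, hv⟩, ← e.ncard_neighborSet, ncard_neighborSet_cycleGraph]

theorem Subgraph.ncard_verts_of_iso {G : SimpleGraph V} {C : G.Subgraph} {H : SimpleGraph W}
    (e : C.coe ≃g H) : C.verts.ncard = Nat.card W := by
  rw [← Nat.card_coe_set_eq, Nat.card_congr e.toEquiv]

theorem Subgraph.neighborSet_inter_nonempty [Fintype V] {G : SimpleGraph V} [DecidableRel G.Adj]
    {A B : G.Subgraph} {v : V}
    (h : G.degree v < (A.neighborSet v).ncard + (B.neighborSet v).ncard) :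
    (A.neighborSet v ∩ B.neighborSet v).Nonempty := by
  rw [← Set.not_disjoint_iff_nonempty_inter]
  intro hdisj
  have hsub : A.neighborSet v ∪ B.neighborSet v ⊆ G.neighborSet v :=
    Set.union_subset (A.neighborSet_subset v) (B.neighborSet_subset v)
  have := Set.ncard_le_ncard hsub
  rw [Set.ncard_union_eq hdisj, ncard_neighborSet_eq_degree] at this
  omega

theorem Subgraph.one_lt_ncard_inter_verts_of_iso_cycleGraph [Fintype V] {G : SimpleGraph V}
    [DecidableRel G.Adj] (hG : G.maxDegree ≤ 3) {A B : G.Subgraph} {m n : ℕ}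
    (eA : A.coe ≃g cycleGraph (m + 3)) (eB : B.coe ≃g cycleGraph (n + 3))
    (hAB : (A.verts ∩ B.verts).Nonempty) :
    1 < (A.verts ∩ B.verts).ncard := by
  obtain ⟨v, hvA, hvB⟩ := hAB
  have hdeg : G.degree v < (A.neighborSet v).ncard + (B.neighborSet v).ncard := by
    rw [ncard_neighborSet_of_iso_cycleGraph eA hvA, ncard_neighborSet_of_iso_cycleGraph eB hvB]
    exact (G.degree_le_maxDegree v).trans_lt (by omega)
  obtain ⟨u, huA, huB⟩ := neighborSet_inter_nonempty hdeg
  rw [Set.one_lt_ncard_iff]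
  exact ⟨v, u, ⟨hvA, hvB⟩, ⟨A.edge_vert (A.adj_symm huA), B.edge_vert (B.adj_symm huB)⟩,
    (A.adj_sub huA).ne⟩

end SimpleGraph

/-- For a graph `G` with `Δ(G) ≤ 3` and `ℓ ∈ {4,5}`, the
`C_ℓ`-vertex-conflict graph of `G` is claw-free: there is no copy `Cs` of the
`ℓ`-cycle together with three pairwise vertex-disjoint copies `C1, C2, C3`
of the `ℓ`-cycle, each sharing a vertex with `Cs`. -/
theorem cycle_vertex_conflict_claw_free_of_maxDegree_le_three
    {V : Type*} [Fintype V] (G : SimpleGraph V) [DecidableRel G.Adj]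
    (hG : G.maxDegree ≤ 3) (ℓ : ℕ) (hℓ : ℓ = 4 ∨ ℓ = 5) :
    ¬ ∃ (Cs C1 C2 C3 : G.Subgraph),
        Nonempty (Cs.coe ≃g cycleGraph ℓ) ∧ Nonempty (C1.coe ≃g cycleGraph ℓ) ∧
        Nonempty (C2.coe ≃g cycleGraph ℓ) ∧ Nonempty (C3.coe ≃g cycleGraph ℓ) ∧
        (Cs.verts ∩ C1.verts).Nonempty ∧
        (Cs.verts ∩ C2.verts).Nonempty ∧
        (Cs.verts ∩ C3.verts).Nonempty ∧
        Disjoint C1.verts C2.verts ∧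
        Disjoint C1.verts C3.verts ∧
        Disjoint C2.verts C3.verts := by
  rintro ⟨Cs, C1, C2, C3, ⟨es⟩, ⟨e1⟩, ⟨e2⟩, ⟨e3⟩, h1, h2, h3, d12, d13, d23⟩
  obtain ⟨n, rfl, hn⟩ : ∃ n, ℓ = n + 3 ∧ n ≤ 2 := by
    rcases hℓ with rfl | rfl
    exacts [⟨1, rfl, by omega⟩, ⟨2, rfl, by omega⟩]
  have k1 := Subgraph.one_lt_ncard_inter_verts_of_iso_cycleGraph hG es e1 h1
  have k2 := Subgraph.one_lt_ncard_inter_verts_of_iso_cycleGraph hG es e2 h2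
  have k3 := Subgraph.one_lt_ncard_inter_verts_of_iso_cycleGraph hG es e3 h3
  have hdisj {X Y : Set V} (h : Disjoint X Y) : Disjoint (Cs.verts ∩ X) (Cs.verts ∩ Y) :=
    h.mono Set.inter_subset_right Set.inter_subset_right
  have hsub : Cs.verts ∩ C1.verts ∪ Cs.verts ∩ C2.verts ∪ Cs.verts ∩ C3.verts ⊆ Cs.verts :=
    Set.union_subset (Set.union_subset Set.inter_subset_left Set.inter_subset_left)
      Set.inter_subset_left
  have hcard := Set.ncard_le_ncard hsub
  rw [Set.ncard_union_eq, Set.ncard_union_eq, Subgraph.ncard_verts_of_iso es, Nat.card_fin]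
    at hcard
  · omega
  · exact hdisj d12
  · exact (hdisj d13).union_left (hdisj d23)
end

section
/- Let G be a graph whose vertex set is partitioned into sets W₁, …, W_{m} each of size at most q, such that every edge of G joins vertices in W_i and W_j with |i − j| ≤ 1 (indices cyclically, i.e., also allowing {i,j} = {1,m}). Then the bandwidth of G is at most 3q. -/
/-!
Label every vertex by the position of its layer in the interleaved order `W₁, W_m, W₂, W_{m-1}, …`.
Cyclically consecutive layers then sit at most two positions apart, including `W₁` and `W_m`.
Listing the vertices sorted by label, the endpoints of an edge are separated only by vertices
whose labels lie in a window of three consecutive labels, i.e. by fewer than `3q` vertices.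
-/

open Finset Function

section SortedLayout

variable {V : Type*} [Fintype V]

theorem exists_equiv_fin_monotone {α : Type*} [LinearOrder α] (f : V → α) :
    ∃ π : V ≃ Fin (Fintype.card V), Monotone (f ∘ π.symm) := by
  let e := Fintype.equivFin V
  refine ⟨e.trans (Tuple.sort (f ∘ e.symm)).symm, ?_⟩
  simpa [Function.comp_def] using Tuple.monotone_sort (f ∘ e.symm)

theorem sub_lt_card_filter_mem_Icc {α : Type*} [LinearOrder α] [LocallyFiniteOrder α]
    {f : V → α} {π : V ≃ Fin (Fintype.card V)} (hπ : Monotone (f ∘ π.symm)) {u v : V}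
    (huv : π u ≤ π v) : (π v : ℕ) - π u < #{w | f w ∈ Icc (f u) (f v)} := by
  have hsub : (Icc (π u) (π v)).map π.symm.toEmbedding ⊆ ({w | f w ∈ Icc (f u) (f v)} : Finset V) := by
    intro w hw
    obtain ⟨k, hk, rfl⟩ := mem_map.1 hw
    obtain ⟨hk₁, hk₂⟩ := mem_Icc.1 hk
    simpa using And.intro (hπ hk₁) (hπ hk₂)
  have := card_le_card hsub
  rw [card_map, Fin.card_Icc] at this
  omega

theorem card_filter_mem_Icc_le {f : V → ℕ} {q : ℕ} (hf : ∀ k, #{v | f v = k} ≤ q) (a b : ℕ) :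
    #{v | f v ∈ Icc a b} ≤ q * (b + 1 - a) := by
  rw [← Nat.card_Icc]
  refine card_le_mul_card_image_of_maps_to (fun v hv => (mem_filter.1 hv).2) q fun k _ => ?_
  rw [filter_filter]
  exact (card_le_card (monotone_filter_right _ fun _ _ h => h.2)).trans (hf k)

theorem exists_equiv_fin_dist_lt_of_card_fiber_le (f : V → ℕ) {q : ℕ}
    (hf : ∀ k, #{v | f v = k} ≤ q) (d : ℕ) :
    ∃ π : V ≃ Fin (Fintype.card V), ∀ u v, Nat.dist (f u) (f v) ≤ d →
      Nat.dist (π u) (π v) < (d + 1) * q := by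
  obtain ⟨π, hπ⟩ := exists_equiv_fin_monotone f
  refine ⟨π, fun u v huv => ?_⟩
  wlog hπuv : π u ≤ π v generalizing u v
  · rw [Nat.dist_comm]
    exact this v u (Nat.dist_comm (f u) (f v) ▸ huv) (le_of_not_ge hπuv)
  have hfuv : f u ≤ f v := by simpa using hπ hπuv
  rw [Nat.dist_eq_sub_of_le hfuv] at huv
  rw [Nat.dist_eq_sub_of_le hπuv]
  calc (π v : ℕ) - π u < #{w | f w ∈ Icc (f u) (f v)} := sub_lt_card_filter_mem_Icc hπ hπuv
    _ ≤ q * (f v + 1 - f u) := card_filter_mem_Icc_le hf _ _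
    _ ≤ (d + 1) * q := by rw [mul_comm]; gcongr; omega

theorem card_filter_comp_eq_le {ι : Type*} [DecidableEq ι] {ℓ : V → ι} {g : ι → ℕ}
    (hg : Injective g) {q : ℕ} (hℓ : ∀ i, #{v | ℓ v = i} ≤ q) (k : ℕ) :
    #{v | g (ℓ v) = k} ≤ q := by
  by_cases hk : ∃ i, g i = k
  · obtain ⟨i, rfl⟩ := hk
    simpa only [hg.eq_iff] using hℓ i
  · simp only [not_exists] at hk
    simp [hk]

end SortedLayout

/-- The position of layer `i` in the layout `0, m - 1, 1, m - 2, …` of the layers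
(zero-based, and the inverse of the permutation `ρ` of the informal proof). -/
def interleave (m i : ℕ) : ℕ := if 2 * i < m then 2 * i else 2 * (m - 1 - i) + 1

theorem interleave_injective (m : ℕ) : Injective fun i : Fin m => interleave m i := by
  intro i j h
  have := i.isLt
  have := j.isLt
  simp only [interleave] at h
  ext
  split_ifs at h <;> omega

theorem dist_interleave_le_two {m i j : ℕ} (hi : i < m) (hj : j < m)
    (hij : (i ≤ j + 1 ∧ j ≤ i + 1) ∨ (i = 0 ∧ j = m - 1) ∨ (j = 0 ∧ i = m - 1)) :
    Nat.dist (interleave m i) (interleave m j) ≤ 2 := by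
  unfold interleave Nat.dist
  split_ifs <;> omega

theorem bandwidth_le_of_cyclic_layering_general
    {V : Type*} [Fintype V] (G : SimpleGraph V) (m q : ℕ)
    (W : Fin m → Set V)
    (hpart : ∀ v : V, ∃! i, v ∈ W i)
    (hsize : ∀ i, (W i).ncard ≤ q)
    (hedge : ∀ u v : V, G.Adj u v → ∃ i j, u ∈ W i ∧ v ∈ W j ∧
        ((i : ℕ) ≤ (j : ℕ) + 1 ∧ (j : ℕ) ≤ (i : ℕ) + 1 ∨
         ((i : ℕ) = 0 ∧ (j : ℕ) = m - 1) ∨ ((j : ℕ) = 0 ∧ (i : ℕ) = m - 1))) :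
    ∃ π : V ≃ Fin (Fintype.card V),
      ∀ u v : V, G.Adj u v → Nat.dist (π u : ℕ) (π v : ℕ) ≤ 3 * q := by
  choose L hL huniq using hpart
  have hlayer : ∀ i, #{v | L v = i} ≤ q := fun i =>
    calc #{v | L v = i} = ({v | L v = i} : Set V).ncard := by simp [← Set.ncard_coe_finset]
      _ ≤ (W i).ncard := Set.ncard_le_ncard fun v (hv : L v = i) => hv ▸ hL v
      _ ≤ q := hsize i
  obtain ⟨π, hπ⟩ := exists_equiv_fin_dist_lt_of_card_fiber_le (fun v => interleave m (L v))
    (card_filter_comp_eq_le (interleave_injective m) hlayer) 2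
  refine ⟨π, fun u v huv => ?_⟩
  obtain ⟨i, j, hi, hj, hij⟩ := hedge u v huv
  obtain rfl := huniq u i hi
  obtain rfl := huniq v j hj
  exact (hπ u v (dist_interleave_le_two (L u).isLt (L v).isLt hij)).le

/-- If the vertex set of `G` is partitioned into layers `W 0, …, W (m-1)`,
each of size at most `q`, and every edge of `G` joins two cyclically consecutive layers
(`|i - j| ≤ 1`, also allowing the pair of the first and last layers), then the bandwidth
of `G` is at most `3q`: there is a linear layout in which the endpoints of every edge are
at distance at most `3q`. -/
theorem bandwidth_le_of_cyclic_layering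
    {V : Type*} [Fintype V] (G : SimpleGraph V) (m q : ℕ) (hm : 1 ≤ m)
    (W : Fin m → Set V)
    (hpart : ∀ v : V, ∃! i, v ∈ W i)
    (hsize : ∀ i, (W i).ncard ≤ q)
    (hedge : ∀ u v : V, G.Adj u v → ∃ i j, u ∈ W i ∧ v ∈ W j ∧
        ((i : ℕ) ≤ (j : ℕ) + 1 ∧ (j : ℕ) ≤ (i : ℕ) + 1 ∨
         ((i : ℕ) = 0 ∧ (j : ℕ) = m - 1) ∨ ((j : ℕ) = 0 ∧ (i : ℕ) = m - 1))) :
    ∃ π : V ≃ Fin (Fintype.card V),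
      ∀ u v : V, G.Adj u v → Nat.dist (π u : ℕ) (π v : ℕ) ≤ 3 * q :=
  bandwidth_le_of_cyclic_layering_general G m q W hpart hsize hedge
end

section
/- Let G' be a cubic graph with n' vertices and m' edges, and let I ⊆ V(G'). Define the path system 𝒮 = {P_u^X : u ∈ I} ∪ {P_{u,e}^Z : u ∈ I, e incident to u} ∪ {P_{u,e}^Y : u ∉ I, e incident to u} in the graph G = K_{2, 2n' + 3m'} as in the reduction. Then I is an independent set of G' if and only if the paths in 𝒮 are pairwise edge-disjoint. -/
open SimpleGraph

/-- Middle-layer vertices of the graph `G = K_{2, 2n' + 3m'}` of the reduction: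
`x u`, `x' u` for `u ∈ V(G')`, `y u e` for `u` an endpoint of `e`, and `z e` for
`e ∈ E(G')`. -/
inductive RMid (V : Type*) where
  | x : V → RMid V
  | x' : V → RMid V
  | y : V → Sym2 V → RMid V
  | z : Sym2 V → RMid V

/-- An edge of `K_{2,*}`: `(false, w)` is the edge `{s, w}` and `(true, w)` is the
edge `{t, w}`, where `s, t` are the two terminals. -/
abbrev RedEdge (V : Type*) := Bool × RMid V

/-- Edge set of the path `P_u^X = ⟨s, x_u, t, x'_u⟩`. -/
def PX {V : Type*} (u : V) : Set (RedEdge V) :=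
  {(false, .x u), (true, .x u), (true, .x' u)}

/-- Edge set of the path `P_{u,e}^Y` where `e = inc u i` is the `i`-th edge incident
to `u` (`P_{u,e}^Y = ⟨s, y_{u,e}, t, x'_u⟩`, `P_{u,f}^Y = ⟨s, y_{u,f}, t, x_u⟩`,
`P_{u,g}^Y = ⟨x_u, s, y_{u,g}, t⟩`). -/
def PY {V : Type*} (inc : V → Fin 3 → Sym2 V) (u : V) (i : Fin 3) : Set (RedEdge V) :=
  if i = 0 then {(false, .y u (inc u 0)), (true, .y u (inc u 0)), (true, .x' u)}
  else if i = 1 then {(false, .y u (inc u 1)), (true, .y u (inc u 1)), (true, .x u)}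
  else {(false, .x u), (false, .y u (inc u 2)), (true, .y u (inc u 2))}

/-- Edge set of the path `P_{u,e}^Z = ⟨y_{u,e}, s, z_e, t⟩` with `e = inc u i`. -/
def PZ {V : Type*} (inc : V → Fin 3 → Sym2 V) (u : V) (i : Fin 3) : Set (RedEdge V) :=
  {(false, .y u (inc u i)), (false, .z (inc u i)), (true, .z (inc u i))}

/-- The indices of the paths of the system
`𝒮 = {P_u^X : u ∈ I} ∪ {P_{u,e}^Z : u ∈ I} ∪ {P_{u,e}^Y : u ∉ I}`:
`(u, none)` is valid iff `u ∈ I`, and `(u, some i)` is always valid. -/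
def validIdx {V : Type*} (I : Set V) : V × Option (Fin 3) → Prop
  | (u, none) => u ∈ I
  | (_, some _) => True

/-- The path of the system `𝒮` at a given index. -/
def pathOf {V : Type*} (inc : V → Fin 3 → Sym2 V) (I : Set V) [DecidablePred (· ∈ I)] :
    V × Option (Fin 3) → Set (RedEdge V)
  | (u, none) => PX u
  | (u, some i) => if u ∈ I then PZ inc u i else PY inc u i

section Aux
variable {V : Type*} (inc : V → Fin 3 → Sym2 V)

lemma dXX {u v : V} (h : u ≠ v) : Disjoint (PX u) (PX (V := V) v) := by
  simp [PX, Set.disjoint_left, h]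

lemma dXZ (u v : V) (j : Fin 3) : Disjoint (PX u) (PZ inc v j) := by
  simp [PX, PZ, Set.disjoint_left]

lemma dXY {u v : V} (h : u ≠ v) (j : Fin 3) : Disjoint (PX u) (PY inc v j) := by
  fin_cases j <;> simp [PX, PY, Set.disjoint_left, h]

lemma dZZ {u v : V} {i j : Fin 3} (h : inc u i ≠ inc v j) :
    Disjoint (PZ inc u i) (PZ inc v j) := by
  simp only [PZ, Set.disjoint_left, Set.mem_insert_iff, Set.mem_singleton_iff]
  rintro a (rfl|rfl|rfl) <;> simp_all <;> rintro rfl <;> simp_all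

lemma dZY {u v : V} (h : u ≠ v) (i j : Fin 3) :
    Disjoint (PZ inc u i) (PY inc v j) := by
  fin_cases j <;> simp [PZ, PY, Set.disjoint_left, h]

lemma dYY {u : V} {i j : Fin 3} (hd : Function.Injective (inc u)) (h : i ≠ j) :
    Disjoint (PY inc u i) (PY inc u j) := by
  have h01 : inc u 0 ≠ inc u 1 := fun e => absurd (hd e) (by decide)
  have h02 : inc u 0 ≠ inc u 2 := fun e => absurd (hd e) (by decide)
  have h12 : inc u 1 ≠ inc u 2 := fun e => absurd (hd e) (by decide)
  fin_cases i <;> fin_cases j <;>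
    simp_all [PY, Set.disjoint_left, Ne, eq_comm]

lemma dYY' {u v : V} (h : u ≠ v) (i j : Fin 3) :
    Disjoint (PY inc u i) (PY inc v j) := by
  fin_cases i <;> fin_cases j <;> simp [PY, Set.disjoint_left, h]

end Aux

/-- Let `G'` be a cubic graph with an enumeration `inc u 0, inc u 1,
inc u 2` of the three edges incident to each vertex `u`, and let `I ⊆ V(G')`.  Then `I`
is an independent set of `G'` iff the paths of the system `𝒮` (in `G = K_{2,2n'+3m'}`)
are pairwise edge-disjoint. -/

theorem independent_iff_reduction_paths_edge_disjoint
    {V : Type*} [Fintype V] [DecidableEq V] (G' : SimpleGraph V) [DecidableRel G'.Adj]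
    (hcubic : ∀ v : V, G'.degree v = 3)
    (inc : V → Fin 3 → Sym2 V)
    (hmem : ∀ u i, inc u i ∈ G'.edgeSet ∧ u ∈ inc u i)
    (hinj : ∀ u : V, Function.Injective (inc u))
    (hsurj : ∀ (u : V), ∀ e ∈ G'.edgeSet, u ∈ e → ∃ i, inc u i = e)
    (I : Set V) [DecidablePred (· ∈ I)] :
    (∀ u ∈ I, ∀ v ∈ I, ¬ G'.Adj u v) ↔
    (∀ a b : V × Option (Fin 3), validIdx I a → validIdx I b → a ≠ b →
        Disjoint (pathOf inc I a) (pathOf inc I b)) := by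
  constructor
  · intro hI a b ha hb hab
    obtain ⟨u, iu⟩ := a
    obtain ⟨v, iv⟩ := b
    have key : ∀ (u' v' : V) (i j : Fin 3), u' ∈ I → v' ∈ I → (u', i) ≠ (v', j) →
        inc u' i ≠ inc v' j := by
      intro u' v' i j hu hv hne heq
      by_cases huv : u' = v'
      · subst huv
        exact hne (by rw [hinj u' heq])
      · have h1 := hmem u' i
        have h2 := hmem v' j
        rw [heq] at h1
        have he : inc v' j = s(u', v') :=
          (Sym2.mem_and_mem_iff huv).mp ⟨h1.2, h2.2⟩
        exact hI u' hu v' hv ((G'.mem_edgeSet).mp (he ▸ h2.1))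
    match iu, iv with
    | none, none =>
      have huv : u ≠ v := fun h => hab (by rw [h])
      simpa [pathOf] using dXX huv
    | none, some j =>
      simp only [validIdx] at ha
      simp only [pathOf]
      split
      · exact dXZ inc u v j
      · exact dXY inc (fun h : u = v => ‹v ∉ I› (h ▸ ha)) j
    | some i, none =>
      simp only [validIdx] at hb
      simp only [pathOf]
      split
      · exact (dXZ inc v u i).symm
      · exact (dXY inc (fun h : v = u => ‹u ∉ I› (h ▸ hb)) i).symm
    | some i, some j =>
      simp only [pathOf]
      by_cases hu : u ∈ I <;> by_cases hv : v ∈ I <;>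
        simp only [hu, hv, if_true, if_false, if_pos, if_neg, not_false_iff]
      · exact dZZ inc (key u v i j hu hv (by simpa using hab))
      · exact dZY inc (fun h : u = v => hv (h ▸ hu)) i j
      · exact (dZY inc (fun h : v = u => hu (h ▸ hv)) j i).symm
      · by_cases huv : u = v
        · subst huv
          exact dYY inc (hinj u) (fun h => hab (by rw [h]))
        · exact dYY' inc huv i j
  · intro h u hu v hv hadj
    have huv : u ≠ v := hadj.ne
    have he : s(u, v) ∈ G'.edgeSet := (G'.mem_edgeSet).mpr hadj
    obtain ⟨i, hi⟩ := hsurj u _ he (Sym2.mem_mk_left u v)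
    obtain ⟨j, hj⟩ := hsurj v _ he (Sym2.mem_mk_right u v)
    have hd := h (u, some i) (v, some j) trivial trivial (by simp [huv])
    simp only [pathOf, if_pos hu, if_pos hv] at hd
    exact Set.disjoint_left.mp hd
      (show (false, RMid.z (inc u i)) ∈ PZ inc u i by simp [PZ])
      (by rw [hi, ← hj]; simp [PZ])
end

section
/- Let G = G₁ • G₂ be a series composition of two two-terminal labeled simple graphs (identifying the sink t₁ of G₁ with the source s₂ of G₂), embedded in a larger simple graph without parallel edges. Then there do not exist two edge-disjoint cycles C, C', each of length at most 4, both of which enter G (contain an edge of G and an edge outside G). -/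
/-!
Every vertex of `G = H₁ ⊔ H₂` other than `s` and `t` has all its edges in `G`, so a cycle entering
`G` switches between edges of `G` and outside edges only at `s` and `t`: it is an `s`–`t` path in
`G` followed by one outside. An `s`–`t` path in `G` has length at least two since `s(s, t)` lies in
neither part, and since `v` separates `s` from `t`, a path of length two is `s`–`v`–`t` and one of
length three uses `s(s, v)` or `s(v, t)`; in the latter case a cycle of length at most four closes
up with the edge `s(s, t)`. Any two edge sets of these shapes meet.
-/

open SimpleGraph

theorem Sym2.mk_eq_of_eq_or_eq {α : Type*} {a b s t : α} (ha : a = s ∨ a = t)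
    (hb : b = s ∨ b = t) (hab : a ≠ b) : s(a, b) = s(s, t) :=
  ((Sym2.mem_and_mem_iff hab).1 ⟨Sym2.mem_iff.2 ha, Sym2.mem_iff.2 hb⟩).symm

namespace SimpleGraph

variable {V : Type*} {Γ : SimpleGraph V}

/-- The edges that a cycle of length at most four entering a series composition with source `s`,
middle vertex `v` and sink `t` must contain. -/
def SeriesCrossing (s v t : V) (E : Set (Sym2 V)) : Prop :=
  (s(s, t) ∈ E ∧ (s(s, v) ∈ E ∨ s(v, t) ∈ E)) ∨ (s(s, v) ∈ E ∧ s(v, t) ∈ E)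

namespace SeriesCrossing

variable {s v t : V} {E F : Set (Sym2 V)}

theorem mono (h : SeriesCrossing s v t E) (hEF : E ⊆ F) : SeriesCrossing s v t F := by
  unfold SeriesCrossing at *
  grind

theorem inter_nonempty (hE : SeriesCrossing s v t E) (hF : SeriesCrossing s v t F) :
    (E ∩ F).Nonempty := by
  rcases hE with ⟨hst, hsv | hvt⟩ | ⟨hsv, hvt⟩ <;>
    rcases hF with ⟨hst', hsv' | hvt'⟩ | ⟨hsv', hvt'⟩
  all_goals first | exact ⟨_, hst, hst'⟩ | exact ⟨_, hsv, hsv'⟩ | exact ⟨_, hvt, hvt'⟩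

end SeriesCrossing

namespace Subgraph

def AttachedOnlyAt (W : Γ.Subgraph) (s t : V) : Prop :=
  ∀ u ∈ W.verts, u ≠ s → u ≠ t → ∀ w : V, Γ.Adj u w → s(u, w) ∈ W.edgeSet

theorem AttachedOnlyAt.eq_or_eq {W : Γ.Subgraph} {s t u w w' : V}
    (hW : W.AttachedOnlyAt s t) (hin : s(u, w) ∈ W.edgeSet) (hadj : Γ.Adj u w')
    (hout : s(u, w') ∉ W.edgeSet) : u = s ∨ u = t := by
  by_contra! h
  exact hout (hW u (Subgraph.mem_edgeSet.1 hin).fst_mem h.1 h.2 w' hadj)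

structure IsSeriesPair (H₁ H₂ : Γ.Subgraph) (s v t : V) : Prop where
  source_not_mem : s ∉ H₂.verts
  sink_not_mem : t ∉ H₁.verts
  inter_subset : H₁.verts ∩ H₂.verts ⊆ {v}

variable {H₁ H₂ : Γ.Subgraph} {s v t a b x y z : V}

theorem mem_verts_of_mem_sup_edgeSet (ha : a ∉ H₂.verts)
    (h : s(a, x) ∈ (H₁ ⊔ H₂).edgeSet) : x ∈ H₁.verts := by
  rcases h with h | h
  · exact h.snd_mem
  · exact absurd h.fst_mem ha

namespace IsSeriesPair

theorem source_sink_not_mem_edgeSet (h : IsSeriesPair H₁ H₂ s v t) :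
    s(s, t) ∉ (H₁ ⊔ H₂).edgeSet :=
  fun hst ↦ h.sink_not_mem (mem_verts_of_mem_sup_edgeSet h.source_not_mem hst)

theorem eq_of_path₂ (h : IsSeriesPair H₁ H₂ s v t) (h₁ : s(s, x) ∈ (H₁ ⊔ H₂).edgeSet)
    (h₂ : s(x, t) ∈ (H₁ ⊔ H₂).edgeSet) : x = v := by
  rw [sup_comm, Sym2.eq_swap] at h₂
  exact h.inter_subset ⟨mem_verts_of_mem_sup_edgeSet h.source_not_mem h₁,
    mem_verts_of_mem_sup_edgeSet h.sink_not_mem h₂⟩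

theorem eq_or_eq_of_path₃ (h : IsSeriesPair H₁ H₂ s v t)
    (h₁ : s(s, x) ∈ (H₁ ⊔ H₂).edgeSet) (h₂ : s(x, y) ∈ (H₁ ⊔ H₂).edgeSet)
    (h₃ : s(y, t) ∈ (H₁ ⊔ H₂).edgeSet) : x = v ∨ y = v := by
  rw [sup_comm, Sym2.eq_swap] at h₃
  have hx := mem_verts_of_mem_sup_edgeSet h.source_not_mem h₁
  have hy := mem_verts_of_mem_sup_edgeSet h.sink_not_mem h₃
  rcases h₂ with h₂ | h₂
  · exact Or.inr (h.inter_subset ⟨h₂.snd_mem, hy⟩)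
  · exact Or.inl (h.inter_subset ⟨hx, h₂.fst_mem⟩)

theorem seriesCrossing_of_path₂ (h : IsSeriesPair H₁ H₂ s v t) (hab : s(a, b) = s(s, t))
    (h₁ : s(a, x) ∈ (H₁ ⊔ H₂).edgeSet) (h₂ : s(x, b) ∈ (H₁ ⊔ H₂).edgeSet) :
    SeriesCrossing s v t {s(a, x), s(x, b)} := by
  rcases Sym2.eq_iff.1 hab with ⟨rfl, rfl⟩ | ⟨rfl, rfl⟩
  · obtain rfl := h.eq_of_path₂ h₁ h₂
    simp [SeriesCrossing]
  · rw [Sym2.eq_swap] at h₁ h₂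
    obtain rfl := h.eq_of_path₂ h₂ h₁
    simp [SeriesCrossing, Sym2.eq_swap]

theorem seriesCrossing_of_path₃ (h : IsSeriesPair H₁ H₂ s v t) (hab : s(a, b) = s(s, t))
    (h₁ : s(a, x) ∈ (H₁ ⊔ H₂).edgeSet) (h₂ : s(x, y) ∈ (H₁ ⊔ H₂).edgeSet)
    (h₃ : s(y, b) ∈ (H₁ ⊔ H₂).edgeSet) :
    SeriesCrossing s v t {s(a, x), s(y, b), s(b, a)} := by
  rcases Sym2.eq_iff.1 hab with ⟨rfl, rfl⟩ | ⟨rfl, rfl⟩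
  · rcases h.eq_or_eq_of_path₃ h₁ h₂ h₃ with rfl | rfl <;> simp [SeriesCrossing, Sym2.eq_swap]
  · rw [Sym2.eq_swap] at h₁ h₂ h₃
    rcases h.eq_or_eq_of_path₃ h₃ h₂ h₁ with rfl | rfl <;> simp [SeriesCrossing, Sym2.eq_swap]

theorem seriesCrossing_of_triangle_of_mem_of_not_mem (h : IsSeriesPair H₁ H₂ s v t)
    (hW : (H₁ ⊔ H₂).AttachedOnlyAt s t) (hxy : Γ.Adj x y) (hya : Γ.Adj y a)
    (h₁ : s(a, x) ∈ (H₁ ⊔ H₂).edgeSet) (h₃ : s(y, a) ∉ (H₁ ⊔ H₂).edgeSet) :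
    SeriesCrossing s v t {s(a, x), s(x, y), s(y, a)} := by
  have ha := hW.eq_or_eq h₁ hya.symm (by rwa [Sym2.eq_swap])
  by_cases h₂ : s(x, y) ∈ (H₁ ⊔ H₂).edgeSet
  · have hy := hW.eq_or_eq (by rwa [Sym2.eq_swap]) hya h₃
    exact (h.seriesCrossing_of_path₂ (Sym2.mk_eq_of_eq_or_eq ha hy hya.ne.symm) h₁ h₂).mono
      (by simp [Set.insert_subset_iff])
  · have hx := hW.eq_or_eq (by rwa [Sym2.eq_swap]) hxy h₂
    have hax := (Subgraph.mem_edgeSet.1 h₁).ne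
    exact absurd h₁ (Sym2.mk_eq_of_eq_or_eq ha hx hax ▸ h.source_sink_not_mem_edgeSet)

theorem seriesCrossing_of_square_of_mem_of_not_mem (h : IsSeriesPair H₁ H₂ s v t)
    (hW : (H₁ ⊔ H₂).AttachedOnlyAt s t) (hay : a ≠ y) (hxy : Γ.Adj x y) (hyz : Γ.Adj y z)
    (hza : Γ.Adj z a) (h₁ : s(a, x) ∈ (H₁ ⊔ H₂).edgeSet) (h₄ : s(z, a) ∉ (H₁ ⊔ H₂).edgeSet) :
    SeriesCrossing s v t {s(a, x), s(x, y), s(y, z), s(z, a)} := by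
  have ha := hW.eq_or_eq h₁ hza.symm (by rwa [Sym2.eq_swap])
  by_cases h₂ : s(x, y) ∈ (H₁ ⊔ H₂).edgeSet
  · by_cases h₃ : s(y, z) ∈ (H₁ ⊔ H₂).edgeSet
    · have hz := hW.eq_or_eq (by rwa [Sym2.eq_swap]) hza h₄
      have haz := Sym2.mk_eq_of_eq_or_eq ha hz hza.ne.symm
      exact (h.seriesCrossing_of_path₃ haz h₁ h₂ h₃).mono (by simp [Set.insert_subset_iff])
    · have hy := hW.eq_or_eq (by rwa [Sym2.eq_swap]) hyz h₃
      exact (h.seriesCrossing_of_path₂ (Sym2.mk_eq_of_eq_or_eq ha hy hay) h₁ h₂).mono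
        (by simp [Set.insert_subset_iff])
  · have hx := hW.eq_or_eq (by rwa [Sym2.eq_swap]) hxy h₂
    have hax := (Subgraph.mem_edgeSet.1 h₁).ne
    exact absurd h₁ (Sym2.mk_eq_of_eq_or_eq ha hx hax ▸ h.source_sink_not_mem_edgeSet)

theorem seriesCrossing_of_triangle (h : IsSeriesPair H₁ H₂ s v t)
    (hW : (H₁ ⊔ H₂).AttachedOnlyAt s t) (h₁ : Γ.Adj a x) (h₂ : Γ.Adj x y) (h₃ : Γ.Adj y a)
    (hin : s(a, x) ∈ (H₁ ⊔ H₂).edgeSet ∨ s(x, y) ∈ (H₁ ⊔ H₂).edgeSet ∨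
      s(y, a) ∈ (H₁ ⊔ H₂).edgeSet)
    (hout : s(a, x) ∉ (H₁ ⊔ H₂).edgeSet ∨ s(x, y) ∉ (H₁ ⊔ H₂).edgeSet ∨
      s(y, a) ∉ (H₁ ⊔ H₂).edgeSet) :
    SeriesCrossing s v t {s(a, x), s(x, y), s(y, a)} := by
  -- Rotate the triangle so that it leaves `H₁ ⊔ H₂` at its base vertex.
  rcases (by grind : (s(a, x) ∈ (H₁ ⊔ H₂).edgeSet ∧ s(y, a) ∉ (H₁ ⊔ H₂).edgeSet) ∨
      (s(x, y) ∈ (H₁ ⊔ H₂).edgeSet ∧ s(a, x) ∉ (H₁ ⊔ H₂).edgeSet) ∨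
      (s(y, a) ∈ (H₁ ⊔ H₂).edgeSet ∧ s(x, y) ∉ (H₁ ⊔ H₂).edgeSet))
    with ⟨hi, ho⟩ | ⟨hi, ho⟩ | ⟨hi, ho⟩
  · exact h.seriesCrossing_of_triangle_of_mem_of_not_mem hW h₂ h₃ hi ho
  · exact (h.seriesCrossing_of_triangle_of_mem_of_not_mem hW h₃ h₁ hi ho).mono
      (by simp [Set.insert_subset_iff])
  · exact (h.seriesCrossing_of_triangle_of_mem_of_not_mem hW h₁ h₂ hi ho).mono
      (by simp [Set.insert_subset_iff])

theorem seriesCrossing_of_square (h : IsSeriesPair H₁ H₂ s v t)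
    (hW : (H₁ ⊔ H₂).AttachedOnlyAt s t) (hay : a ≠ y) (hxz : x ≠ z) (h₁ : Γ.Adj a x)
    (h₂ : Γ.Adj x y) (h₃ : Γ.Adj y z) (h₄ : Γ.Adj z a)
    (hin : s(a, x) ∈ (H₁ ⊔ H₂).edgeSet ∨ s(x, y) ∈ (H₁ ⊔ H₂).edgeSet ∨
      s(y, z) ∈ (H₁ ⊔ H₂).edgeSet ∨ s(z, a) ∈ (H₁ ⊔ H₂).edgeSet)
    (hout : s(a, x) ∉ (H₁ ⊔ H₂).edgeSet ∨ s(x, y) ∉ (H₁ ⊔ H₂).edgeSet ∨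
      s(y, z) ∉ (H₁ ⊔ H₂).edgeSet ∨ s(z, a) ∉ (H₁ ⊔ H₂).edgeSet) :
    SeriesCrossing s v t {s(a, x), s(x, y), s(y, z), s(z, a)} := by
  -- Rotate the square so that it leaves `H₁ ⊔ H₂` at its base vertex.
  rcases (by grind : (s(a, x) ∈ (H₁ ⊔ H₂).edgeSet ∧ s(z, a) ∉ (H₁ ⊔ H₂).edgeSet) ∨
      (s(x, y) ∈ (H₁ ⊔ H₂).edgeSet ∧ s(a, x) ∉ (H₁ ⊔ H₂).edgeSet) ∨
      (s(y, z) ∈ (H₁ ⊔ H₂).edgeSet ∧ s(x, y) ∉ (H₁ ⊔ H₂).edgeSet) ∨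
      (s(z, a) ∈ (H₁ ⊔ H₂).edgeSet ∧ s(y, z) ∉ (H₁ ⊔ H₂).edgeSet))
    with ⟨hi, ho⟩ | ⟨hi, ho⟩ | ⟨hi, ho⟩ | ⟨hi, ho⟩
  · exact h.seriesCrossing_of_square_of_mem_of_not_mem hW hay h₂ h₃ h₄ hi ho
  · exact (h.seriesCrossing_of_square_of_mem_of_not_mem hW hxz h₃ h₄ h₁ hi ho).mono
      (by simp [Set.insert_subset_iff])
  · exact (h.seriesCrossing_of_square_of_mem_of_not_mem hW hay.symm h₄ h₁ h₂ hi ho).mono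
      (by simp [Set.insert_subset_iff])
  · exact (h.seriesCrossing_of_square_of_mem_of_not_mem hW hxz.symm h₁ h₂ h₃ hi ho).mono
      (by simp [Set.insert_subset_iff])

theorem seriesCrossing_edgeSet_of_isCycle (h : IsSeriesPair H₁ H₂ s v t)
    (hW : (H₁ ⊔ H₂).AttachedOnlyAt s t) {C : Γ.Walk a a} (hC : C.IsCycle) (hlen : C.length ≤ 4)
    (hin : ∃ e ∈ C.edges, e ∈ (H₁ ⊔ H₂).edgeSet) (hout : ∃ e ∈ C.edges, e ∉ (H₁ ⊔ H₂).edgeSet) :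
    SeriesCrossing s v t C.edgeSet := by
  match C, hC, hlen, hC.three_le_length, hin, hout with
  | .cons h₁ (.cons h₂ (.cons h₃ .nil)), _, _, _, hin, hout =>
    simp only [Walk.edges_cons, Walk.edges_nil, List.mem_cons, List.not_mem_nil, or_false,
      exists_eq_or_imp, exists_eq_left] at hin hout
    simpa using h.seriesCrossing_of_triangle hW h₁ h₂ h₃ hin hout
  | .cons h₁ (.cons h₂ (.cons h₃ (.cons h₄ .nil))), hC, _, _, hin, hout =>
    have hnd := hC.support_nodup
    simp only [Walk.support_cons, Walk.support_nil, List.tail_cons, List.nodup_cons,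
      List.mem_cons, List.not_mem_nil, or_false, not_or] at hnd
    obtain ⟨⟨-, hxz, -⟩, ⟨-, hya⟩, -⟩ := hnd
    simp only [Walk.edges_cons, Walk.edges_nil, List.mem_cons, List.not_mem_nil, or_false,
      exists_eq_or_imp, exists_eq_left] at hin hout
    simpa using h.seriesCrossing_of_square hW (Ne.symm hya) hxz h₁ h₂ h₃ h₄ hin hout
  | .cons _ (.cons _ (.cons _ (.cons _ (.cons _ _)))), _, hlen, _, _, _ =>
    simp only [Walk.length_cons] at hlen
    omega

end IsSeriesPair

end Subgraph

end SimpleGraph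

theorem no_two_short_cycles_enter_series_composition_general
    {V : Type*} (Γ : SimpleGraph V)
    (H₁ H₂ : Γ.Subgraph) (s v t : V)
    (hs₂ : s ∉ H₂.verts)
    (ht₁ : t ∉ H₁.verts)
    (hmid : H₁.verts ∩ H₂.verts = {v})
    (hclosed : ∀ u ∈ (H₁ ⊔ H₂).verts, u ≠ s → u ≠ t →
        ∀ w : V, Γ.Adj u w → s(u, w) ∈ (H₁ ⊔ H₂).edgeSet) :
    ¬ ∃ (a b : V) (C : Γ.Walk a a) (C' : Γ.Walk b b),
        C.IsCycle ∧ C'.IsCycle ∧ C.length ≤ 4 ∧ C'.length ≤ 4 ∧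
        (∀ e ∈ C.edges, e ∉ C'.edges) ∧
        (∃ e ∈ C.edges, e ∈ (H₁ ⊔ H₂).edgeSet) ∧
        (∃ e ∈ C.edges, e ∉ (H₁ ⊔ H₂).edgeSet) ∧
        (∃ e ∈ C'.edges, e ∈ (H₁ ⊔ H₂).edgeSet) ∧
        (∃ e ∈ C'.edges, e ∉ (H₁ ⊔ H₂).edgeSet) := by
  rintro ⟨a, b, C, C', hC, hC', hlen, hlen', hdisj, hin, hout, hin', hout'⟩
  have hseries : H₁.IsSeriesPair H₂ s v t := ⟨hs₂, ht₁, hmid.subset⟩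
  obtain ⟨e, he, he'⟩ :=
    (hseries.seriesCrossing_edgeSet_of_isCycle hclosed hC hlen hin hout).inter_nonempty
      (hseries.seriesCrossing_edgeSet_of_isCycle hclosed hC' hlen' hin' hout')
  exact hdisj e he he'

/-- Let `G = H₁ • H₂` be a series composition of two two-terminal
labeled graphs (source `s` of `H₁`, identified vertex `v`, sink `t` of `H₂`), embedded
in a larger simple graph `Γ` which attaches to `G` only at `s` and `t`.  Then there do
not exist two edge-disjoint cycles of `Γ`, each of length at most `4`, both of which
enter `G` (contain an edge of `G` and an edge outside `G`). -/
theorem no_two_short_cycles_enter_series_composition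
    {V : Type*} (Γ : SimpleGraph V)
    (H₁ H₂ : Γ.Subgraph) (s v t : V)
    (hsv : s ≠ v) (hvt : v ≠ t) (hst : s ≠ t)
    (hs₁ : s ∈ H₁.verts) (hs₂ : s ∉ H₂.verts)
    (ht₂ : t ∈ H₂.verts) (ht₁ : t ∉ H₁.verts)
    (hmid : H₁.verts ∩ H₂.verts = {v})
    (hclosed : ∀ u ∈ (H₁ ⊔ H₂).verts, u ≠ s → u ≠ t →
        ∀ w : V, Γ.Adj u w → s(u, w) ∈ (H₁ ⊔ H₂).edgeSet) :
    ¬ ∃ (a b : V) (C : Γ.Walk a a) (C' : Γ.Walk b b),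
        C.IsCycle ∧ C'.IsCycle ∧ C.length ≤ 4 ∧ C'.length ≤ 4 ∧
        (∀ e ∈ C.edges, e ∉ C'.edges) ∧
        (∃ e ∈ C.edges, e ∈ (H₁ ⊔ H₂).edgeSet) ∧
        (∃ e ∈ C.edges, e ∉ (H₁ ⊔ H₂).edgeSet) ∧
        (∃ e ∈ C'.edges, e ∈ (H₁ ⊔ H₂).edgeSet) ∧
        (∃ e ∈ C'.edges, e ∉ (H₁ ⊔ H₂).edgeSet) :=
  no_two_short_cycles_enter_series_composition_general Γ H₁ H₂ s v t hs₂ ht₁ hmid hclosed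
end

section
/- Let x be a parallel-composition node with children x₁,…,x_c, let A_x be the auxiliary graph on vertices a₁,…,a_c where an edge a_i a_j indicates the existence of a valid cycle entering both G_{x_i} and G_{x_j} compatible with optimal sub-solutions, and let opt_i be the maximum size of an edge-disjoint packing inside G_{x_i}. If M* is a maximum matching of A_x, then the maximum size of an edge-disjoint packing of listed cycles (of length ≤ 4) inside G_x equals (Σ_{i=1}^{c} opt_i) + |M*|. -/
open SimpleGraph

variable {V : Type*} [DecidableEq V]

/-- `E` is the edge set of a cycle of `Γ` of length at most `4`. -/
def IsShortCycleEdges (Γ : SimpleGraph V) (E : Finset (Sym2 V)) : Prop :=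
  ∃ (a : V) (w : Γ.Walk a a), w.IsCycle ∧ w.length ≤ 4 ∧ w.edges.toFinset = E

/-- `P` is an edge-disjoint packing of listed cycles from `ℒ` inside the subgraph `K`. -/
def IsPacking {Γ : SimpleGraph V} (ℒ : Finset (Finset (Sym2 V))) (K : Γ.Subgraph)
    (P : Finset (Finset (Sym2 V))) : Prop :=
  P ⊆ ℒ ∧ (∀ E ∈ P, (E : Set (Sym2 V)) ⊆ K.edgeSet) ∧
    ∀ E ∈ P, ∀ F ∈ P, E ≠ F → Disjoint E F

/-- A cycle (given by its edge set `E`) enters the subgraph `K`. -/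
def Enters {Γ : SimpleGraph V} (K : Γ.Subgraph) (E : Finset (Sym2 V)) : Prop :=
  (∃ e ∈ E, e ∈ K.edgeSet) ∧ (∃ e ∈ E, e ∉ K.edgeSet)

/-- `H` is a series composition of two parts, or a single edge `st`
(a leaf or a `•`-node of a layered decomposition tree). -/
def SeriesOrEdge {Γ : SimpleGraph V} (H : Γ.Subgraph) (s t : V) : Prop :=
  H.edgeSet = {s(s, t)} ∨
    ∃ (K₁ K₂ : Γ.Subgraph) (v : V), H = K₁ ⊔ K₂ ∧ K₁.verts ∩ K₂.verts = {v} ∧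
      s ∈ K₁.verts ∧ s ∉ K₂.verts ∧ t ∈ K₂.verts ∧ t ∉ K₁.verts ∧ v ≠ s ∧ v ≠ t

/-!
A cycle can pass from one part `Hc i` to another only through a vertex the two parts share,
that is, through `s` or `t`. A cycle of length at most four has distinct vertices, so it meets
`{s, t}` at most twice: a cycle entering `Hc i` is an `s`–`t` path in `Hc i` followed by an
`s`–`t` path in one other part `Hc j`. In a series composition every `s`–`t` path passes
through the cut vertex, so two edge-disjoint such paths both have three edges, and two cycles
containing them would both have to close up with the edge `st`. Hence no part is entered by two
cycles of a packing.

For the upper bound, split a packing of `Gx` into the cycles inside the parts and the crossing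
cycles. The crossing cycles whose two parts are both packed optimally inside are edges of `A`
and form a matching; every other crossing cycle enters a part packed below its optimum, and
distinct crossing cycles enter distinct parts. For the lower bound, every edge `ij` of the
matching supplies a crossing cycle and optimal packings of `Hc i` and `Hc j` avoiding it; as
matching edges share no part, these combine with optimal packings of the remaining parts.
-/

open Finset Function

theorem Finset.disjoint_of_forall_disjoint {α : Type*} {P Q : Finset (Finset α)}
    (hne : ∀ E ∈ P, E.Nonempty) (hd : ∀ E ∈ P, ∀ F ∈ Q, Disjoint E F) : Disjoint P Q :=
  Finset.disjoint_left.2 fun E hP hQ =>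
    (hne E hP).ne_empty ((disjoint_self_iff_empty E).1 (hd E hP E hQ))

section Matching

variable {W : Type*} {G : SimpleGraph W}

theorem SimpleGraph.Subgraph.IsMatching.eq_of_mem_edgeSet {M : G.Subgraph} (hM : M.IsMatching)
    {e e' : Sym2 W} (he : e ∈ M.edgeSet) (he' : e' ∈ M.edgeSet) {v : W} (hv : v ∈ e)
    (hv' : v ∈ e') : e = e' := by
  obtain ⟨w, rfl⟩ := Sym2.mem_iff_exists.1 hv
  obtain ⟨w', rfl⟩ := Sym2.mem_iff_exists.1 hv'
  rw [hM.eq_of_adj_left (Subgraph.mem_edgeSet.1 he) (Subgraph.mem_edgeSet.1 he')]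

theorem SimpleGraph.exists_isMatching_ncard_eq {κ : Type*} (S : Finset κ) (r : κ → W → Prop)
    (hadj : ∀ x ∈ S, ∃ u v, G.Adj u v ∧ r x u ∧ r x v)
    (huniq : ∀ x ∈ S, ∀ y ∈ S, ∀ u, r x u → r y u → x = y) :
    ∃ M : G.Subgraph, M.IsMatching ∧ M.edgeSet.ncard = #S := by
  choose u v huv hu hv using fun x : S => hadj x x.2
  have huniq' {x y : S} {w : W} (hx : w = u x ∨ w = v x) (hy : w = u y ∨ w = v y) : x = y := by
    refine Subtype.ext (huniq x x.2 y y.2 w ?_ ?_)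
    · rcases hx with rfl | rfl
      exacts [hu x, hv x]
    · rcases hy with rfl | rfl
      exacts [hu y, hv y]
  refine ⟨⨆ x, G.subgraphOfAdj (huv x),
    Subgraph.IsMatching.iSup (fun x => .subgraphOfAdj _) fun x y hxy => ?_, ?_⟩
  · simp only [support_subgraphOfAdj]
    exact Set.disjoint_left.2 fun w hx hy => hxy (huniq' hx hy)
  · simp only [Subgraph.edgeSet_iSup, edgeSet_subgraphOfAdj,
      Set.iUnion_singleton_eq_range]
    rw [Set.ncard_range_of_injective, Nat.card_eq_fintype_card, Fintype.card_coe]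
    intro x y hxy
    have hux : u x ∈ s(u y, v y) := by
      rw [← show s(u x, v x) = s(u y, v y) from hxy]
      exact Sym2.mem_mk_left _ _
    exact huniq' (Or.inl rfl) (Sym2.mem_iff.1 hux)

end Matching

section Packing

variable {W : Type*} {G : SimpleGraph W} {ℒ : Finset (Finset (Sym2 W))} {K K' : G.Subgraph}
  {P Q : Finset (Finset (Sym2 W))}

theorem IsPacking.mono (h : IsPacking ℒ K P) (hK : K ≤ K') : IsPacking ℒ K' P :=
  ⟨h.1, fun E hE => (h.2.1 E hE).trans (Subgraph.edgeSet_mono hK), h.2.2⟩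

theorem IsPacking.subset (h : IsPacking ℒ K P) (hQP : Q ⊆ P)
    (hQ : ∀ E ∈ Q, (E : Set (Sym2 W)) ⊆ K'.edgeSet) : IsPacking ℒ K' Q :=
  ⟨hQP.trans h.1, hQ, fun E hE F hF => h.2.2 E (hQP hE) F (hQP hF)⟩

theorem IsPacking.union [DecidableEq W] (hP : IsPacking ℒ K P) (hQ : IsPacking ℒ K Q)
    (hd : ∀ E ∈ P, ∀ F ∈ Q, Disjoint E F) : IsPacking ℒ K (P ∪ Q) := by
  refine ⟨union_subset hP.1 hQ.1, fun E hE => ?_, fun E hE F hF hEF => ?_⟩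
  · rcases mem_union.1 hE with h | h
    exacts [hP.2.1 E h, hQ.2.1 E h]
  · rcases mem_union.1 hE with hE | hE <;> rcases mem_union.1 hF with hF | hF
    exacts [hP.2.2 E hE F hF hEF, hd E hE F hF, (hd F hF E hE).symm, hQ.2.2 E hE F hF hEF]

theorem IsPacking.biUnion [DecidableEq W] {κ : Type*} {S : Finset κ}
    {P : κ → Finset (Finset (Sym2 W))}
    (hP : ∀ k ∈ S, IsPacking ℒ K (P k))
    (hd : ∀ k ∈ S, ∀ l ∈ S, k ≠ l → ∀ E ∈ P k, ∀ F ∈ P l, Disjoint E F) :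
    IsPacking ℒ K (S.biUnion P) := by
  refine ⟨biUnion_subset.2 fun k hk => (hP k hk).1, fun E hE => ?_, fun E hE F hF hEF => ?_⟩
  · obtain ⟨k, hk, hE⟩ := mem_biUnion.1 hE
    exact (hP k hk).2.1 E hE
  · obtain ⟨k, hk, hE⟩ := mem_biUnion.1 hE
    obtain ⟨l, hl, hF⟩ := mem_biUnion.1 hF
    obtain rfl | hkl := eq_or_ne k l
    exacts [(hP k hk).2.2 E hE F hF hEF, hd k hk l hl hkl E hE F hF]

end Packing

section Parts

variable {W ι : Type*} {G : SimpleGraph W} {H : ι → G.Subgraph}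

theorem eq_of_mem_edgeSet_of_mem_edgeSet
    (hedisj : ∀ i j, i ≠ j → (H i).edgeSet ∩ (H j).edgeSet = ∅) {e : Sym2 W} {i j : ι}
    (hi : e ∈ (H i).edgeSet) (hj : e ∈ (H j).edgeSet) : i = j := by
  by_contra hij
  exact (hedisj i j hij).subset ⟨hi, hj⟩

theorem disjoint_of_subset_edgeSet
    (hedisj : ∀ i j, i ≠ j → (H i).edgeSet ∩ (H j).edgeSet = ∅) {i j : ι} (hij : i ≠ j)
    {E F : Finset (Sym2 W)} (hE : (E : Set (Sym2 W)) ⊆ (H i).edgeSet)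
    (hF : (F : Set (Sym2 W)) ⊆ (H j).edgeSet) : Disjoint E F :=
  Finset.disjoint_left.2 fun _ he hf =>
    hij (eq_of_mem_edgeSet_of_mem_edgeSet hedisj (hE he) (hF hf))

theorem terminal_of_mem_edgeSet {s t : W}
    (hpar : ∀ i j, i ≠ j → (H i).verts ∩ (H j).verts = {s, t}) {i j : ι} (hij : i ≠ j)
    {x y z : W} (hi : s(x, y) ∈ (H i).edgeSet) (hj : s(y, z) ∈ (H j).edgeSet) :
    y = s ∨ y = t := by
  have hy : y ∈ (H i).verts ∩ (H j).verts := ⟨(H i).edge_vert (hi.symm), (H j).edge_vert hj⟩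
  rwa [hpar i j hij] at hy

theorem exists_enters_of_forall_not_subset {E : Finset (Sym2 W)}
    (hsub : (E : Set (Sym2 W)) ⊆ (⨆ k, H k).edgeSet) (hne : E.Nonempty)
    (hout : ∀ k, ¬(E : Set (Sym2 W)) ⊆ (H k).edgeSet) : ∃ k, Enters (H k) E := by
  obtain ⟨e, he⟩ := hne
  obtain ⟨k, hk⟩ := Set.mem_iUnion.1 (Subgraph.edgeSet_iSup H ▸ hsub he)
  obtain ⟨f, hf, hfk⟩ := Set.not_subset.1 (hout k)
  exact ⟨k, ⟨e, he, hk⟩, ⟨f, hf, hfk⟩⟩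

end Parts

theorem not_three_terminals {α : Type*} {s t a b d : α} (hab : a ≠ b) (had : a ≠ d)
    (hbd : b ≠ d) (ha : a = s ∨ a = t) (hb : b = s ∨ b = t) (hd : d = s ∨ d = t) : False := by
  rcases ha with rfl | rfl <;> rcases hb with rfl | rfl <;> rcases hd with rfl | rfl <;>
    contradiction

namespace IsShortCycleEdges

variable {Γ : SimpleGraph V} {E : Finset (Sym2 V)}

theorem eq_triangle_or_square (h : IsShortCycleEdges Γ E) :
    (∃ a b d : V, a ≠ b ∧ a ≠ d ∧ b ≠ d ∧ E = {s(a, b), s(b, d), s(d, a)}) ∨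
    (∃ a b x y : V, a ≠ b ∧ a ≠ x ∧ a ≠ y ∧ b ≠ x ∧ b ≠ y ∧ x ≠ y ∧
      E = {s(a, b), s(b, x), s(x, y), s(y, a)}) := by
  obtain ⟨a, w, hcyc, hlen, rfl⟩ := h
  have h3 := hcyc.three_le_length
  have hnodup := hcyc.support_nodup
  rcases w with _ | ⟨_, _ | ⟨_, _ | ⟨_, _ | ⟨_, _ | ⟨_, _⟩⟩⟩⟩⟩ <;>
    simp only [Walk.length_cons, Walk.length_nil] at h3 hlen <;> try omega
  all_goals simp only [Walk.support_cons, Walk.support_nil, List.tail_cons, List.nodup_cons,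
    List.mem_cons, List.not_mem_nil, or_false, not_or] at hnodup
  · exact Or.inl ⟨_, _, _, Ne.symm hnodup.1.2, Ne.symm hnodup.2.1, hnodup.1.1, by simp⟩
  · exact Or.inr ⟨_, _, _, _, Ne.symm hnodup.1.2.2, Ne.symm hnodup.2.1.2, Ne.symm hnodup.2.2.1,
      hnodup.1.1, hnodup.1.2.1, hnodup.2.1.1, by simp⟩

theorem nonempty (h : IsShortCycleEdges Γ E) : E.Nonempty := by
  obtain ⟨a, w, hcyc, -, rfl⟩ := h
  rw [List.toFinset_nonempty_iff, Ne, Walk.edges_eq_nil]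
  exact hcyc.not_nil

theorem card_le_four (h : IsShortCycleEdges Γ E) : #E ≤ 4 := by
  obtain ⟨a, w, -, hlen, rfl⟩ := h
  exact (List.toFinset_card_le _).trans (w.length_edges ▸ hlen)

end IsShortCycleEdges

def IsShortPathEdges (s t : V) (F : Finset (Sym2 V)) : Prop :=
  F = {s(s, t)} ∨ (∃ u, u ≠ s ∧ u ≠ t ∧ F = {s(s, u), s(u, t)}) ∨
    ∃ u w, u ≠ w ∧ u ≠ s ∧ u ≠ t ∧ w ≠ s ∧ w ≠ t ∧ F = {s(s, u), s(u, w), s(w, t)}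

section ShortPath

variable {Γ : SimpleGraph V} {s t a b x d : V}

theorem isShortPathEdges_single (ha : a = s ∨ a = t) (hd : d = s ∨ d = t) (had : a ≠ d) :
    IsShortPathEdges s t {s(a, d)} := by
  rcases ha with rfl | rfl <;> rcases hd with rfl | rfl <;> first | exact absurd rfl had | left
  · rfl
  · rw [Sym2.eq_swap]

theorem isShortPathEdges_pair (ha : a = s ∨ a = t) (hd : d = s ∨ d = t) (had : a ≠ d)
    (hba : b ≠ a) (hbd : b ≠ d) : IsShortPathEdges s t {s(a, b), s(b, d)} := by
  refine Or.inr (Or.inl ?_)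
  rcases ha with rfl | rfl <;> rcases hd with rfl | rfl <;> first | exact absurd rfl had | skip
  · exact ⟨b, hba, hbd, rfl⟩
  · refine ⟨b, hbd, hba, ?_⟩
    ext e
    simp only [mem_insert, mem_singleton, Sym2.eq_swap]
    tauto

theorem isShortPathEdges_triple (ha : a = s ∨ a = t) (hd : d = s ∨ d = t) (had : a ≠ d)
    (hba : b ≠ a) (hbd : b ≠ d) (hxa : x ≠ a) (hxd : x ≠ d) (hbx : b ≠ x) :
    IsShortPathEdges s t {s(a, b), s(b, x), s(x, d)} := by
  refine Or.inr (Or.inr ?_)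
  rcases ha with rfl | rfl <;> rcases hd with rfl | rfl <;> first | exact absurd rfl had | skip
  · exact ⟨b, x, hbx, hba, hbd, hxa, hxd, rfl⟩
  · refine ⟨x, b, hbx.symm, hxd, hxa, hbd, hba, ?_⟩
    ext e
    simp only [mem_insert, mem_singleton, Sym2.eq_swap]
    tauto

namespace IsShortPathEdges

variable {F : Finset (Sym2 V)}

theorem nonempty (h : IsShortPathEdges s t F) : F.Nonempty := by
  obtain rfl | ⟨u, -, -, rfl⟩ | ⟨u, w, -, -, -, -, -, rfl⟩ := h <;> simp

theorem eq_singleton_of_card_le_one (hst : s ≠ t) (h : IsShortPathEdges s t F) (hF : #F ≤ 1) :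
    F = {s(s, t)} := by
  obtain rfl | ⟨u, hus, hut, rfl⟩ | ⟨u, w, huw, hus, hut, hws, hwt, rfl⟩ := h
  · rfl
  · rw [card_pair (by simp only [ne_eq, Sym2.eq_iff]; tauto)] at hF
    omega
  · have : 1 < #{s(s, u), s(u, w), s(w, t)} :=
      one_lt_card.2 ⟨s(s, u), by simp, s(u, w), by simp, by simp only [ne_eq, Sym2.eq_iff]; tauto⟩
    omega

theorem eq_singleton_of_card_eq_three (hst : s ≠ t) (h : IsShortPathEdges s t F)
    {E : Finset (Sym2 V)} (hE : IsShortCycleEdges Γ (E ∪ F)) (hEF : Disjoint E F)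
    (h3 : #E = 3) : F = {s(s, t)} := by
  have := hE.card_le_four
  rw [card_union_of_disjoint hEF, h3] at this
  exact h.eq_singleton_of_card_le_one hst (by omega)

theorem card_eq_three_or_mem_cut {K₁ K₂ : Γ.Subgraph} {v : V}
    (hcut : K₁.verts ∩ K₂.verts = {v}) (hs : s ∉ K₂.verts) (ht : t ∉ K₁.verts)
    (hF : (F : Set (Sym2 V)) ⊆ (K₁ ⊔ K₂).edgeSet) (h : IsShortPathEdges s t F) :
    (#F = 3 ∨ s(s, v) ∈ F ∧ s(v, t) ∈ F) ∧ (s(s, v) ∈ F ∨ s(v, t) ∈ F) := by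
  have left {u : V} (hu : s(s, u) ∈ F) : u ∈ K₁.verts := by
    obtain h | h := Subgraph.sup_adj.1 (hF hu)
    exacts [h.snd_mem, absurd h.fst_mem hs]
  have right {u : V} (hu : s(u, t) ∈ F) : u ∈ K₂.verts := by
    obtain h | h := Subgraph.sup_adj.1 (hF hu)
    exacts [absurd h.snd_mem ht, h.fst_mem]
  have cut {u : V} (h₁ : u ∈ K₁.verts) (h₂ : u ∈ K₂.verts) : u = v :=
    Set.mem_singleton_iff.1 (hcut ▸ ⟨h₁, h₂⟩)
  obtain rfl | ⟨u, -, -, rfl⟩ | ⟨u, w, huw, hus, hut, hws, hwt, rfl⟩ := h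
  · exact absurd (right (mem_singleton_self _)) hs
  · obtain rfl := cut (left (u := u) (by simp)) (right (by simp))
    simp
  · have hcard : #{s(s, u), s(u, w), s(w, t)} = 3 :=
      card_eq_three.2 ⟨_, _, _, by simp only [ne_eq, Sym2.eq_iff]; tauto,
        by simp only [ne_eq, Sym2.eq_iff]; tauto, by simp only [ne_eq, Sym2.eq_iff]; tauto, rfl⟩
    obtain h | h := Subgraph.sup_adj.1 (hF (by simp : s(u, w) ∈ _))
    · obtain rfl := cut h.snd_mem (right (u := w) (by simp))
      simp [hcard]
    · obtain rfl := cut (left (u := u) (by simp)) h.fst_mem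
      simp [hcard]

theorem card_eq_three_of_disjoint {H : Γ.Subgraph} (hH : SeriesOrEdge H s t)
    {F₁ F₂ : Finset (Sym2 V)} (hF₁ : (F₁ : Set (Sym2 V)) ⊆ H.edgeSet)
    (hF₂ : (F₂ : Set (Sym2 V)) ⊆ H.edgeSet) (h₁ : IsShortPathEdges s t F₁)
    (h₂ : IsShortPathEdges s t F₂) (hd : Disjoint F₁ F₂) : #F₁ = 3 := by
  rcases hH with hst | ⟨K₁, K₂, v, rfl, hcut, -, hs, -, ht, -, -⟩
  · obtain ⟨e₁, he₁⟩ := h₁.nonempty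
    obtain ⟨e₂, he₂⟩ := h₂.nonempty
    have h₁st : e₁ = s(s, t) := by simpa [hst] using hF₁ he₁
    have h₂st : e₂ = s(s, t) := by simpa [hst] using hF₂ he₂
    subst h₁st h₂st
    exact absurd he₂ (Finset.disjoint_left.1 hd he₁)
  · obtain ⟨h₁3 | ⟨hsv, hvt⟩, -⟩ := h₁.card_eq_three_or_mem_cut hcut hs ht hF₁
    · exact h₁3
    · obtain hsv' | hvt' := (h₂.card_eq_three_or_mem_cut hcut hs ht hF₂).2
      exacts [absurd hsv' (Finset.disjoint_left.1 hd hsv),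
        absurd hvt' (Finset.disjoint_left.1 hd hvt)]

end IsShortPathEdges

end ShortPath

def SplitsBetween {Γ : SimpleGraph V} (s t : V) (K L : Γ.Subgraph) (E : Finset (Sym2 V)) :
    Prop :=
  ∃ F G, E = F ∪ G ∧ (F : Set (Sym2 V)) ⊆ K.edgeSet ∧ (G : Set (Sym2 V)) ⊆ L.edgeSet ∧
    IsShortPathEdges s t F ∧ IsShortPathEdges s t G

section Parallel

variable {Γ : SimpleGraph V} {s t : V} {ι : Type*} {Hc : ι → Γ.Subgraph}
  {ℒ : Finset (Finset (Sym2 V))}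

theorem exists_splitsBetween_triangle
    (hpar : ∀ i j, i ≠ j → (Hc i).verts ∩ (Hc j).verts = {s, t}) {a b d : V} (hab : a ≠ b)
    (had : a ≠ d) (hbd : b ≠ d)
    {i j k : ι} (h₁ : s(a, b) ∈ (Hc i).edgeSet) (h₂ : s(b, d) ∈ (Hc j).edgeSet)
    (h₃ : s(d, a) ∈ (Hc k).edgeSet) (hki : k ≠ i) :
    ∃ l ≠ i, SplitsBetween s t (Hc i) (Hc l) {s(a, b), s(b, d), s(d, a)} := by
  have ha := terminal_of_mem_edgeSet hpar hki h₃ h₁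
  by_cases hji : j = i
  · subst hji
    have hd := terminal_of_mem_edgeSet hpar hki.symm h₂ h₃
    refine ⟨k, hki, {s(a, b), s(b, d)}, {s(d, a)}, by ext; simp,
      by simp [Set.insert_subset_iff, h₁, h₂], by simpa using h₃,
      isShortPathEdges_pair ha hd had hab.symm hbd,
      isShortPathEdges_single hd ha had.symm⟩
  · have hb := terminal_of_mem_edgeSet hpar (Ne.symm hji) h₁ h₂
    obtain rfl : k = j := by
      by_contra hkj
      exact not_three_terminals hab had hbd ha hb
        (terminal_of_mem_edgeSet hpar (Ne.symm hkj) h₂ h₃)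
    refine ⟨k, hki, {s(a, b)}, {s(b, d), s(d, a)}, insert_eq _ _, by simpa using h₁,
      by simp [Set.insert_subset_iff, h₂, h₃], isShortPathEdges_single ha hb hab,
      isShortPathEdges_pair hb ha hab.symm hbd.symm had.symm⟩

theorem exists_splitsBetween_square
    (hpar : ∀ i j, i ≠ j → (Hc i).verts ∩ (Hc j).verts = {s, t}) {a b x y : V}
    (hab : a ≠ b) (hax : a ≠ x) (hay : a ≠ y) (hbx : b ≠ x) (hby : b ≠ y) (hxy : x ≠ y)
    {i j k l : ι} (h₁ : s(a, b) ∈ (Hc i).edgeSet) (h₂ : s(b, x) ∈ (Hc j).edgeSet)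
    (h₃ : s(x, y) ∈ (Hc k).edgeSet) (h₄ : s(y, a) ∈ (Hc l).edgeSet) (hli : l ≠ i) :
    ∃ m ≠ i, SplitsBetween s t (Hc i) (Hc m) {s(a, b), s(b, x), s(x, y), s(y, a)} := by
  have ha := terminal_of_mem_edgeSet hpar hli h₄ h₁
  by_cases hji : j = i
  · subst hji
    by_cases hkj : k = j
    · subst hkj
      have hy := terminal_of_mem_edgeSet hpar hli.symm h₃ h₄
      exact ⟨l, hli, {s(a, b), s(b, x), s(x, y)}, {s(y, a)}, by ext; simp,
        by simp [Set.insert_subset_iff, h₁, h₂, h₃], by simpa using h₄,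
        isShortPathEdges_triple ha hy hay hab.symm hby hax.symm hxy hbx,
        isShortPathEdges_single hy ha hay.symm⟩
    · have hx := terminal_of_mem_edgeSet hpar (Ne.symm hkj) h₂ h₃
      obtain rfl : l = k := by
        by_contra hlk
        exact not_three_terminals hax hay hxy ha hx
          (terminal_of_mem_edgeSet hpar (Ne.symm hlk) h₃ h₄)
      exact ⟨l, hli, {s(a, b), s(b, x)}, {s(x, y), s(y, a)},
        by ext; simp only [mem_insert, mem_singleton, mem_union]; tauto,
        by simp [Set.insert_subset_iff, h₁, h₂], by simp [Set.insert_subset_iff, h₃, h₄],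
        isShortPathEdges_pair ha hx hax hab.symm hbx,
        isShortPathEdges_pair hx ha hax.symm hxy.symm hay.symm⟩
  · have hb := terminal_of_mem_edgeSet hpar (Ne.symm hji) h₁ h₂
    obtain rfl : k = j := by
      by_contra hkj
      exact not_three_terminals hab hax hbx ha hb
        (terminal_of_mem_edgeSet hpar (Ne.symm hkj) h₂ h₃)
    obtain rfl : l = k := by
      by_contra hlk
      exact not_three_terminals hab hay hby ha hb
        (terminal_of_mem_edgeSet hpar (Ne.symm hlk) h₃ h₄)
    exact ⟨l, hli, {s(a, b)}, {s(b, x), s(x, y), s(y, a)}, insert_eq _ _, by simpa using h₁,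
      by simp [Set.insert_subset_iff, h₂, h₃, h₄], isShortPathEdges_single ha hb hab,
      isShortPathEdges_triple hb ha hab.symm hbx.symm hax.symm hby.symm hay.symm hxy⟩

theorem exists_splitsBetween_triangle_of_enters
    (hpar : ∀ i j, i ≠ j → (Hc i).verts ∩ (Hc j).verts = {s, t}) {a b d : V} (hab : a ≠ b)
    (had : a ≠ d) (hbd : b ≠ d) (hcov : ∀ e ∈ ({s(a, b), s(b, d), s(d, a)} : Finset (Sym2 V)),
      ∃ k, e ∈ (Hc k).edgeSet) {i : ι} (hi : Enters (Hc i) {s(a, b), s(b, d), s(d, a)}) :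
    ∃ j ≠ i, SplitsBetween s t (Hc i) (Hc j) {s(a, b), s(b, d), s(d, a)} := by
  have cyclic {p q r : Prop} (h : p ∨ q ∨ r) (h' : ¬p ∨ ¬q ∨ ¬r) :
      (p ∧ ¬r) ∨ (q ∧ ¬p) ∨ (r ∧ ¬q) := by
    tauto
  have rotate (p q r : Sym2 V) : ({p, q, r} : Finset (Sym2 V)) = {q, r, p} := by
    ext; simp only [mem_insert, mem_singleton]; tauto
  obtain ⟨k₁, h₁⟩ := hcov s(a, b) (by simp)
  obtain ⟨k₂, h₂⟩ := hcov s(b, d) (by simp)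
  obtain ⟨k₃, h₃⟩ := hcov s(d, a) (by simp)
  simp only [Enters, mem_insert, mem_singleton, exists_eq_or_imp, exists_eq_left] at hi
  -- rotate the triangle so that its first edge lies in `Hc i` and its last one does not
  rcases cyclic hi.1 hi.2 with ⟨hin, hout⟩ | ⟨hin, hout⟩ | ⟨hin, hout⟩
  · exact exists_splitsBetween_triangle hpar hab had hbd hin h₂ h₃ (fun h => hout (h ▸ h₃))
  · rw [rotate]
    exact exists_splitsBetween_triangle hpar hbd hab.symm had.symm hin h₃ h₁
      (fun h => hout (h ▸ h₁))
  · rw [rotate, rotate]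
    exact exists_splitsBetween_triangle hpar had.symm hbd.symm hab hin h₁ h₂
      (fun h => hout (h ▸ h₂))

theorem exists_splitsBetween_square_of_enters
    (hpar : ∀ i j, i ≠ j → (Hc i).verts ∩ (Hc j).verts = {s, t}) {a b x y : V}
    (hab : a ≠ b) (hax : a ≠ x) (hay : a ≠ y) (hbx : b ≠ x) (hby : b ≠ y) (hxy : x ≠ y)
    (hcov : ∀ e ∈ ({s(a, b), s(b, x), s(x, y), s(y, a)} : Finset (Sym2 V)),
      ∃ k, e ∈ (Hc k).edgeSet) {i : ι} (hi : Enters (Hc i) {s(a, b), s(b, x), s(x, y), s(y, a)}) :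
    ∃ j ≠ i, SplitsBetween s t (Hc i) (Hc j) {s(a, b), s(b, x), s(x, y), s(y, a)} := by
  have cyclic {p q r u : Prop} (h : p ∨ q ∨ r ∨ u) (h' : ¬p ∨ ¬q ∨ ¬r ∨ ¬u) :
      (p ∧ ¬u) ∨ (q ∧ ¬p) ∨ (r ∧ ¬q) ∨ (u ∧ ¬r) := by
    tauto
  have rotate (p q r u : Sym2 V) : ({p, q, r, u} : Finset (Sym2 V)) = {q, r, u, p} := by
    ext; simp only [mem_insert, mem_singleton]; tauto
  obtain ⟨k₁, h₁⟩ := hcov s(a, b) (by simp)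
  obtain ⟨k₂, h₂⟩ := hcov s(b, x) (by simp)
  obtain ⟨k₃, h₃⟩ := hcov s(x, y) (by simp)
  obtain ⟨k₄, h₄⟩ := hcov s(y, a) (by simp)
  simp only [Enters, mem_insert, mem_singleton, exists_eq_or_imp, exists_eq_left] at hi
  rcases cyclic hi.1 hi.2 with ⟨hin, hout⟩ | ⟨hin, hout⟩ | ⟨hin, hout⟩ | ⟨hin, hout⟩
  · exact exists_splitsBetween_square hpar hab hax hay hbx hby hxy hin h₂ h₃ h₄
      (fun h => hout (h ▸ h₄))
  · rw [rotate]
    exact exists_splitsBetween_square hpar hbx hby hab.symm hxy hax.symm hay.symm hin h₃ h₄ h₁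
      (fun h => hout (h ▸ h₁))
  · rw [rotate, rotate]
    exact exists_splitsBetween_square hpar hxy hax.symm hbx.symm hay.symm hby.symm hab hin h₄
      h₁ h₂ (fun h => hout (h ▸ h₂))
  · rw [rotate, rotate, rotate]
    exact exists_splitsBetween_square hpar hay.symm hby.symm hxy.symm hab hax hbx hin h₁ h₂ h₃
      (fun h => hout (h ▸ h₃))

theorem exists_splitsBetween_of_enters
    (hpar : ∀ i j, i ≠ j → (Hc i).verts ∩ (Hc j).verts = {s, t}) {E : Finset (Sym2 V)}
    (hE : IsShortCycleEdges Γ E) (hsub : (E : Set (Sym2 V)) ⊆ (⨆ k, Hc k).edgeSet) {i : ι}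
    (hi : Enters (Hc i) E) : ∃ j ≠ i, SplitsBetween s t (Hc i) (Hc j) E := by
  have hcov : ∀ e ∈ E, ∃ k, e ∈ (Hc k).edgeSet := fun e he => by
    simpa [Subgraph.edgeSet_iSup] using hsub he
  obtain ⟨a, b, d, hab, had, hbd, rfl⟩ | ⟨a, b, x, y, hab, hax, hay, hbx, hby, hxy, rfl⟩ :=
    hE.eq_triangle_or_square
  · exact exists_splitsBetween_triangle_of_enters hpar hab had hbd hcov hi
  · exact exists_splitsBetween_square_of_enters hpar hab hax hay hbx hby hxy hcov hi

theorem exists_enters_ne (hpar : ∀ i j, i ≠ j → (Hc i).verts ∩ (Hc j).verts = {s, t})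
    (hedisj : ∀ i j, i ≠ j → (Hc i).edgeSet ∩ (Hc j).edgeSet = ∅) {E : Finset (Sym2 V)}
    (hE : IsShortCycleEdges Γ E) (hsub : (E : Set (Sym2 V)) ⊆ (⨆ k, Hc k).edgeSet) {i : ι}
    (hi : Enters (Hc i) E) : ∃ j ≠ i, Enters (Hc j) E := by
  obtain ⟨j, hji, F, G, rfl, hF, hG, pF, pG⟩ := exists_splitsBetween_of_enters hpar hE hsub hi
  obtain ⟨f, hf⟩ := pF.nonempty
  obtain ⟨g, hg⟩ := pG.nonempty
  exact ⟨j, hji, ⟨g, mem_union_right _ hg, hG hg⟩,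
    ⟨f, mem_union_left _ hf, fun hfj => hji (eq_of_mem_edgeSet_of_mem_edgeSet hedisj hfj (hF hf))⟩⟩

theorem mem_edgeSet_or_mem_edgeSet_of_enters
    (hpar : ∀ i j, i ≠ j → (Hc i).verts ∩ (Hc j).verts = {s, t})
    (hedisj : ∀ i j, i ≠ j → (Hc i).edgeSet ∩ (Hc j).edgeSet = ∅) {E : Finset (Sym2 V)}
    (hE : IsShortCycleEdges Γ E) (hsub : (E : Set (Sym2 V)) ⊆ (⨆ k, Hc k).edgeSet) {i j : ι}
    (hij : i ≠ j) (hi : Enters (Hc i) E) (hj : Enters (Hc j) E) :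
    ∀ e ∈ E, e ∈ (Hc i).edgeSet ∨ e ∈ (Hc j).edgeSet := by
  obtain ⟨k, -, F, G, rfl, hF, hG, -, -⟩ := exists_splitsBetween_of_enters hpar hE hsub hi
  obtain rfl : k = j := by
    obtain ⟨g, hg, hgj⟩ := hj.1
    rcases mem_union.1 hg with hgF | hgG
    · exact absurd (eq_of_mem_edgeSet_of_mem_edgeSet hedisj (hF hgF) hgj) hij
    · exact eq_of_mem_edgeSet_of_mem_edgeSet hedisj (hG hgG) hgj
  intro e he
  rcases mem_union.1 he with h | h
  exacts [Or.inl (hF h), Or.inr (hG h)]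

theorem not_disjoint_of_enters (hst : s ≠ t)
    (hpar : ∀ i j, i ≠ j → (Hc i).verts ∩ (Hc j).verts = {s, t})
    (hedisj : ∀ i j, i ≠ j → (Hc i).edgeSet ∩ (Hc j).edgeSet = ∅) {i : ι}
    (hser : SeriesOrEdge (Hc i) s t) {E₁ E₂ : Finset (Sym2 V)} (h₁ : IsShortCycleEdges Γ E₁)
    (h₂ : IsShortCycleEdges Γ E₂) (hsub₁ : (E₁ : Set (Sym2 V)) ⊆ (⨆ k, Hc k).edgeSet)
    (hsub₂ : (E₂ : Set (Sym2 V)) ⊆ (⨆ k, Hc k).edgeSet) (he₁ : Enters (Hc i) E₁)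
    (he₂ : Enters (Hc i) E₂) : ¬Disjoint E₁ E₂ := by
  obtain ⟨j₁, hj₁, F₁, G₁, rfl, hF₁, hG₁, pF₁, pG₁⟩ :=
    exists_splitsBetween_of_enters hpar h₁ hsub₁ he₁
  obtain ⟨j₂, hj₂, F₂, G₂, rfl, hF₂, hG₂, pF₂, pG₂⟩ :=
    exists_splitsBetween_of_enters hpar h₂ hsub₂ he₂
  intro hd
  have hF : Disjoint F₁ F₂ := hd.mono subset_union_left subset_union_left
  have hG₁st := pG₁.eq_singleton_of_card_eq_three hst h₁
    (disjoint_of_subset_edgeSet hedisj hj₁.symm hF₁ hG₁)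
    (pF₁.card_eq_three_of_disjoint hser hF₁ hF₂ pF₂ hF)
  have hG₂st := pG₂.eq_singleton_of_card_eq_three hst h₂
    (disjoint_of_subset_edgeSet hedisj hj₂.symm hF₂ hG₂)
    (pF₂.card_eq_three_of_disjoint hser hF₂ hF₁ pF₁ hF.symm)
  exact Finset.disjoint_left.1 hd (mem_union_right _ (hG₁st ▸ mem_singleton_self _))
    (mem_union_right _ (hG₂st ▸ mem_singleton_self _))

open scoped Classical in
theorem card_eq_sum_card_filter_add_card_filter [Fintype ι]
    (hedisj : ∀ i j, i ≠ j → (Hc i).edgeSet ∩ (Hc j).edgeSet = ∅)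
    {P : Finset (Finset (Sym2 V))} (hne : ∀ E ∈ P, E.Nonempty) :
    #P = ∑ k, #(P.filter fun E => ↑E ⊆ (Hc k).edgeSet) +
      #(P.filter fun E => ∀ k, ¬↑E ⊆ (Hc k).edgeSet) := by
  have hinside : (P.filter fun E => ∃ k, ↑E ⊆ (Hc k).edgeSet) =
      univ.biUnion fun k => P.filter fun E => ↑E ⊆ (Hc k).edgeSet := by
    ext E
    simp
  rw [← card_biUnion fun k _ l _ hkl => disjoint_of_forall_disjoint
    (fun E hE => hne E (filter_subset _ _ hE)) fun E hE F hF =>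
      disjoint_of_subset_edgeSet hedisj hkl (mem_filter.1 hE).2 (mem_filter.1 hF).2,
    ← hinside, ← card_filter_add_card_filter_not (fun E : Finset (Sym2 V) =>
      ∃ k, (E : Set (Sym2 V)) ⊆ (Hc k).edgeSet)]
  simp only [not_exists]

theorem card_le_ncard_add_sum_of_crossing [Fintype ι] (hst : s ≠ t)
    (hpar : ∀ i j, i ≠ j → (Hc i).verts ∩ (Hc j).verts = {s, t})
    (hedisj : ∀ i j, i ≠ j → (Hc i).edgeSet ∩ (Hc j).edgeSet = ∅)
    (hser : ∀ i, SeriesOrEdge (Hc i) s t) (hL : ∀ E ∈ ℒ, IsShortCycleEdges Γ E)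
    {opt : ι → ℕ} {A : SimpleGraph ι}
    (hA : ∀ i j, i ≠ j → (∃ C ∈ ℒ, (C : Set (Sym2 V)) ⊆ (⨆ k, Hc k).edgeSet ∧
      Enters (Hc i) C ∧ Enters (Hc j) C ∧
      (∃ P, IsPacking ℒ (Hc i) P ∧ #P = opt i ∧ ∀ E ∈ P, Disjoint E C) ∧
      (∃ P, IsPacking ℒ (Hc j) P ∧ #P = opt j ∧ ∀ E ∈ P, Disjoint E C)) → A.Adj i j)
    {M : A.Subgraph}
    (hMmax : ∀ M' : A.Subgraph, M'.IsMatching → M'.edgeSet.ncard ≤ M.edgeSet.ncard)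
    {Q : ι → Finset (Finset (Sym2 V))} (hQ : ∀ k, IsPacking ℒ (Hc k) (Q k))
    (hQopt : ∀ k, #(Q k) ≤ opt k) {X : Finset (Finset (Sym2 V))}
    (hX : IsPacking ℒ (⨆ k, Hc k) X) (hXenters : ∀ E ∈ X, ∃ k, Enters (Hc k) E)
    (hQX : ∀ k, ∀ F ∈ Q k, ∀ E ∈ X, Disjoint F E) :
    #X ≤ M.edgeSet.ncard + ∑ k, (opt k - #(Q k)) := by
  classical
  have huniq : ∀ E ∈ X, ∀ E' ∈ X, ∀ k, Enters (Hc k) E → Enters (Hc k) E' → E = E' := by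
    intro E hE E' hE' k hk hk'
    by_contra hne
    exact not_disjoint_of_enters hst hpar hedisj (hser k) (hL E (hX.1 hE)) (hL E' (hX.1 hE'))
      (hX.2.1 E hE) (hX.2.1 E' hE') hk hk' (hX.2.2 E hE E' hE' hne)
  have hsplit := card_filter_add_card_filter_not (s := X)
    fun E => ∀ k, Enters (Hc k) E → #(Q k) = opt k
  set D := X.filter fun E => ∀ k, Enters (Hc k) E → #(Q k) = opt k
  have hDadj : ∀ E ∈ D, ∃ i j, A.Adj i j ∧ Enters (Hc i) E ∧ Enters (Hc j) E := by
    intro E hE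
    obtain ⟨hEX, hsat⟩ := mem_filter.1 hE
    obtain ⟨i, hi⟩ := hXenters E hEX
    obtain ⟨j, hji, hj⟩ := exists_enters_ne hpar hedisj (hL E (hX.1 hEX)) (hX.2.1 E hEX) hi
    exact ⟨i, j, hA i j hji.symm ⟨E, hX.1 hEX, hX.2.1 E hEX, hi, hj,
      ⟨Q i, hQ i, hsat i hi, fun F hF => hQX i F hF E hEX⟩,
      ⟨Q j, hQ j, hsat j hj, fun F hF => hQX j F hF E hEX⟩⟩, hi, hj⟩
  obtain ⟨M', hM', hM'card⟩ := exists_isMatching_ncard_eq D (fun E k => Enters (Hc k) E) hDadj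
    fun E hE E' hE' => huniq E (filter_subset _ _ hE) E' (filter_subset _ _ hE')
  have hD : #D ≤ M.edgeSet.ncard := hM'card ▸ hMmax M' hM'
  have hXD : #(X.filter fun E => ¬∀ k, Enters (Hc k) E → #(Q k) = opt k) ≤
      #(univ.filter fun k => #(Q k) < opt k) := by
    refine card_le_card_of_forall_subsingleton (fun E k => Enters (Hc k) E) (fun E hE => ?_)
      fun k _ E hE E' hE' => huniq E (filter_subset _ _ hE.1) E' (filter_subset _ _ hE'.1) k
        hE.2 hE'.2
    obtain ⟨-, hns⟩ := mem_filter.1 hE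
    simp only [not_forall] at hns
    obtain ⟨k, hk, hlt⟩ := hns
    exact ⟨k, mem_filter.2 ⟨mem_univ _, lt_of_le_of_ne (hQopt k) hlt⟩, hk⟩
  have hdef : #(univ.filter fun k => #(Q k) < opt k) ≤ ∑ k, (opt k - #(Q k)) := by
    rw [card_filter]
    exact sum_le_sum fun k _ => by split_ifs <;> omega
  omega

theorem card_le_sum_add_ncard_of_isPacking [Fintype ι] (hst : s ≠ t)
    (hpar : ∀ i j, i ≠ j → (Hc i).verts ∩ (Hc j).verts = {s, t})
    (hedisj : ∀ i j, i ≠ j → (Hc i).edgeSet ∩ (Hc j).edgeSet = ∅)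
    (hser : ∀ i, SeriesOrEdge (Hc i) s t) (hL : ∀ E ∈ ℒ, IsShortCycleEdges Γ E)
    {opt : ι → ℕ} (hopt : ∀ k P, IsPacking ℒ (Hc k) P → #P ≤ opt k) {A : SimpleGraph ι}
    (hA : ∀ i j, i ≠ j → (∃ C ∈ ℒ, (C : Set (Sym2 V)) ⊆ (⨆ k, Hc k).edgeSet ∧
      Enters (Hc i) C ∧ Enters (Hc j) C ∧
      (∃ P, IsPacking ℒ (Hc i) P ∧ #P = opt i ∧ ∀ E ∈ P, Disjoint E C) ∧
      (∃ P, IsPacking ℒ (Hc j) P ∧ #P = opt j ∧ ∀ E ∈ P, Disjoint E C)) → A.Adj i j)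
    {M : A.Subgraph}
    (hMmax : ∀ M' : A.Subgraph, M'.IsMatching → M'.edgeSet.ncard ≤ M.edgeSet.ncard)
    {P : Finset (Finset (Sym2 V))} (hP : IsPacking ℒ (⨆ k, Hc k) P) :
    #P ≤ ∑ k, opt k + M.edgeSet.ncard := by
  classical
  have hne : ∀ E ∈ P, E.Nonempty := fun E hE => (hL E (hP.1 hE)).nonempty
  set Q := fun k => P.filter fun E => ↑E ⊆ (Hc k).edgeSet
  set X := P.filter fun E => ∀ k, ¬↑E ⊆ (Hc k).edgeSet
  have hQ (k : ι) : IsPacking ℒ (Hc k) (Q k) :=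
    hP.subset (filter_subset _ _) fun E hE => (mem_filter.1 hE).2
  have hQX (k : ι) : ∀ F ∈ Q k, ∀ E ∈ X, Disjoint F E := fun F hF E hE =>
    hP.2.2 F (filter_subset _ _ hF) E (filter_subset _ _ hE) fun hFE =>
      (mem_filter.1 hE).2 k (hFE ▸ (mem_filter.1 hF).2)
  have hX : IsPacking ℒ (⨆ k, Hc k) X :=
    hP.subset (filter_subset _ _) fun E hE => hP.2.1 E (filter_subset _ _ hE)
  have hXenters : ∀ E ∈ X, ∃ k, Enters (Hc k) E := fun E hE =>
    exists_enters_of_forall_not_subset (hX.2.1 E hE) (hne E (filter_subset _ _ hE))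
      (mem_filter.1 hE).2
  have hcross : #X ≤ M.edgeSet.ncard + ∑ k, (opt k - #(Q k)) :=
    card_le_ncard_add_sum_of_crossing hst hpar hedisj hser hL hA hMmax hQ
      (fun k => hopt k _ (hQ k)) hX hXenters hQX
  have hsum : ∑ k, #(Q k) + ∑ k, (opt k - #(Q k)) = ∑ k, opt k := by
    rw [← sum_add_distrib]
    exact sum_congr rfl fun k _ => Nat.add_sub_cancel' (hopt k _ (hQ k))
  have hsplit : #P = ∑ k, #(Q k) + #X := card_eq_sum_card_filter_add_card_filter hedisj hne
  omega

theorem exists_cycle_of_mem_edgeSet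
    (hpar : ∀ i j, i ≠ j → (Hc i).verts ∩ (Hc j).verts = {s, t})
    (hedisj : ∀ i j, i ≠ j → (Hc i).edgeSet ∩ (Hc j).edgeSet = ∅)
    (hL : ∀ E ∈ ℒ, IsShortCycleEdges Γ E) {opt : ι → ℕ} {A : SimpleGraph ι}
    (hA : ∀ i j, A.Adj i j → ∃ C ∈ ℒ, (C : Set (Sym2 V)) ⊆ (⨆ k, Hc k).edgeSet ∧
      Enters (Hc i) C ∧ Enters (Hc j) C ∧
      (∃ P, IsPacking ℒ (Hc i) P ∧ #P = opt i ∧ ∀ E ∈ P, Disjoint E C) ∧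
      (∃ P, IsPacking ℒ (Hc j) P ∧ #P = opt j ∧ ∀ E ∈ P, Disjoint E C))
    {e : Sym2 ι} (he : e ∈ A.edgeSet) :
    ∃ C ∈ ℒ, (∀ f ∈ C, ∃ k ∈ e, f ∈ (Hc k).edgeSet) ∧ ∀ k ∈ e, Enters (Hc k) C ∧
      ∃ P, IsPacking ℒ (Hc k) P ∧ #P = opt k ∧ ∀ E ∈ P, Disjoint E C := by
  induction e using Sym2.ind with
  | _ i j =>
  obtain ⟨C, hCL, hCsub, hi, hj, hPi, hPj⟩ := hA i j he
  refine ⟨C, hCL, fun f hf => ?_, fun k hk => ?_⟩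
  · rcases mem_edgeSet_or_mem_edgeSet_of_enters hpar hedisj (hL C hCL) hCsub (A.ne_of_adj he)
      hi hj f hf with h | h
    exacts [⟨i, Sym2.mem_mk_left _ _, h⟩, ⟨j, Sym2.mem_mk_right _ _, h⟩]
  · rcases Sym2.mem_iff.1 hk with rfl | rfl
    exacts [⟨hi, hPi⟩, ⟨hj, hPj⟩]

theorem isPacking_biUnion_union_image [Fintype ι] {κ : Type*} [Fintype κ]
    (hedisj : ∀ i j, i ≠ j → (Hc i).edgeSet ∩ (Hc j).edgeSet = ∅)
    (hne : ∀ E ∈ ℒ, E.Nonempty) {Q : ι → Finset (Finset (Sym2 V))}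
    (hQ : ∀ k, IsPacking ℒ (Hc k) (Q k)) {C : κ → Finset (Sym2 V)} (hCL : ∀ e, C e ∈ ℒ)
    (hCsub : ∀ e, (C e : Set (Sym2 V)) ⊆ (⨆ k, Hc k).edgeSet)
    (hCdisj : Pairwise (Disjoint on C))
    (hQC : ∀ k e, ∀ F ∈ Q k, Disjoint F (C e)) :
    IsPacking ℒ (⨆ k, Hc k) (univ.biUnion Q ∪ univ.image C) ∧
      #(univ.biUnion Q ∪ univ.image C) = ∑ k, #(Q k) + Fintype.card κ := by
  classical
  have hQdisj (k l : ι) (hkl : k ≠ l) : ∀ E ∈ Q k, ∀ F ∈ Q l, Disjoint E F := fun E hE F hF =>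
    disjoint_of_subset_edgeSet hedisj hkl ((hQ k).2.1 E hE) ((hQ l).2.1 F hF)
  have hQCdisj : ∀ E ∈ univ.biUnion Q, ∀ F ∈ univ.image C, Disjoint E F := by
    simp only [mem_biUnion, mem_univ, true_and, mem_image, forall_exists_index,
      forall_apply_eq_imp_iff]
    exact fun F k hF e => hQC k e F hF
  have hQpack : IsPacking ℒ (⨆ k, Hc k) (univ.biUnion Q) :=
    IsPacking.biUnion (fun k _ => (hQ k).mono (le_iSup Hc k)) fun k _ l _ => hQdisj k l
  have hCpack : IsPacking ℒ (⨆ k, Hc k) (univ.image C) := by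
    refine ⟨image_subset_iff.2 fun e _ => hCL e, ?_, ?_⟩ <;>
      simp only [mem_image, mem_univ, true_and, forall_exists_index, forall_apply_eq_imp_iff]
    · exact hCsub
    · exact fun e e' hee' => hCdisj fun h => hee' (h ▸ rfl)
  have hCinj : Injective C := fun e e' h => by
    by_contra hee'
    have hd : Disjoint (C e) (C e') := hCdisj hee'
    rw [h, disjoint_self_iff_empty] at hd
    exact (hne _ (hCL e')).ne_empty hd
  refine ⟨hQpack.union hCpack hQCdisj, ?_⟩
  rw [card_union_of_disjoint (disjoint_of_forall_disjoint (fun E hE => hne E (hQpack.1 hE))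
    hQCdisj), card_biUnion fun k _ l _ hkl => disjoint_of_forall_disjoint
      (fun E hE => hne E ((hQ k).1 hE)) (hQdisj k l hkl), card_image_of_injective _ hCinj,
    card_univ]

theorem exists_isPacking_card_eq [Fintype ι]
    (hpar : ∀ i j, i ≠ j → (Hc i).verts ∩ (Hc j).verts = {s, t})
    (hedisj : ∀ i j, i ≠ j → (Hc i).edgeSet ∩ (Hc j).edgeSet = ∅)
    (hL : ∀ E ∈ ℒ, IsShortCycleEdges Γ E) {opt : ι → ℕ}
    (hopt : ∀ k, ∃ P, IsPacking ℒ (Hc k) P ∧ #P = opt k) {A : SimpleGraph ι}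
    (hA : ∀ i j, A.Adj i j → ∃ C ∈ ℒ, (C : Set (Sym2 V)) ⊆ (⨆ k, Hc k).edgeSet ∧
      Enters (Hc i) C ∧ Enters (Hc j) C ∧
      (∃ P, IsPacking ℒ (Hc i) P ∧ #P = opt i ∧ ∀ E ∈ P, Disjoint E C) ∧
      (∃ P, IsPacking ℒ (Hc j) P ∧ #P = opt j ∧ ∀ E ∈ P, Disjoint E C))
    {M : A.Subgraph} (hM : M.IsMatching) :
    ∃ P, IsPacking ℒ (⨆ k, Hc k) P ∧ #P = ∑ k, opt k + M.edgeSet.ncard := by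
  classical
  choose C hCL hCsub hCk using fun e : M.edgeSet =>
    exists_cycle_of_mem_edgeSet hpar hedisj hL hA (M.edgeSet_subset e.2)
  have hQ (k : ι) : ∃ Q, IsPacking ℒ (Hc k) Q ∧ #Q = opt k ∧
      ∀ e : M.edgeSet, k ∈ (e : Sym2 ι) → ∀ F ∈ Q, Disjoint F (C e) := by
    by_cases hk : ∃ e : M.edgeSet, k ∈ (e : Sym2 ι)
    · obtain ⟨e, hke⟩ := hk
      obtain ⟨-, Q, hQ, hQc, hQd⟩ := hCk e k hke
      refine ⟨Q, hQ, hQc, fun e' hke' => ?_⟩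
      rwa [Subtype.ext (hM.eq_of_mem_edgeSet e'.2 e.2 hke' hke)]
    · obtain ⟨Q, hQ, hQc⟩ := hopt k
      exact ⟨Q, hQ, hQc, fun e he => absurd ⟨e, he⟩ hk⟩
  choose Q hQ hQc hQd using hQ
  have hCdisj : Pairwise (Disjoint on C) := by
    refine fun e e' hee' => Finset.disjoint_left.2 fun f hf hf' => hee' ?_
    obtain ⟨k, hke, hk⟩ := hCsub e f hf
    obtain ⟨l, hle, hl⟩ := hCsub e' f hf'
    obtain rfl := eq_of_mem_edgeSet_of_mem_edgeSet hedisj hk hl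
    exact Subtype.ext (hM.eq_of_mem_edgeSet e.2 e'.2 hke hle)
  have hQC (k : ι) (e : M.edgeSet) (F : Finset (Sym2 V)) (hF : F ∈ Q k) : Disjoint F (C e) := by
    by_cases hke : k ∈ (e : Sym2 ι)
    · exact hQd k e hke F hF
    · refine Finset.disjoint_left.2 fun f hfF hfC => ?_
      obtain ⟨l, hle, hl⟩ := hCsub e f hfC
      exact hke (eq_of_mem_edgeSet_of_mem_edgeSet hedisj ((hQ k).2.1 F hF hfF) hl ▸ hle)
  obtain ⟨hP, hcard⟩ := isPacking_biUnion_union_image hedisj (fun E hE => (hL E hE).nonempty) hQ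
    hCL (fun e f hf => by
      obtain ⟨k, -, hk⟩ := hCsub e f hf
      exact Subgraph.edgeSet_mono (le_iSup Hc k) hk) hCdisj hQC
  refine ⟨_, hP, ?_⟩
  rw [hcard, ← Nat.card_eq_fintype_card, Nat.card_coe_set_eq]
  simp only [hQc]

end Parallel

theorem parallel_node_packing_eq_sum_opt_add_matching_general
    (Γ : SimpleGraph V) (s t : V) (hst : s ≠ t)
    (c : ℕ) (Hc : Fin c → Γ.Subgraph)
    (hpar : ∀ i j, i ≠ j → (Hc i).verts ∩ (Hc j).verts = {s, t})
    (hedisj : ∀ i j, i ≠ j → (Hc i).edgeSet ∩ (Hc j).edgeSet = ∅)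
    (hser : ∀ i, SeriesOrEdge (Hc i) s t)
    (Gx : Γ.Subgraph) (hGx : Gx = ⨆ i, Hc i)
    (ℒ : Finset (Finset (Sym2 V))) (hL : ∀ E ∈ ℒ, IsShortCycleEdges Γ E)
    (opt : Fin c → ℕ)
    (hopt : ∀ i, (∃ P, IsPacking ℒ (Hc i) P ∧ P.card = opt i) ∧
        ∀ P, IsPacking ℒ (Hc i) P → P.card ≤ opt i)
    (A : SimpleGraph (Fin c))
    (hA : ∀ i j, A.Adj i j ↔ i ≠ j ∧ ∃ Cc ∈ ℒ,
        (Cc : Set (Sym2 V)) ⊆ Gx.edgeSet ∧ Enters (Hc i) Cc ∧ Enters (Hc j) Cc ∧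
        (∃ P, IsPacking ℒ (Hc i) P ∧ P.card = opt i ∧ ∀ E ∈ P, Disjoint E Cc) ∧
        (∃ P, IsPacking ℒ (Hc j) P ∧ P.card = opt j ∧ ∀ E ∈ P, Disjoint E Cc))
    (M : A.Subgraph) (hM : M.IsMatching)
    (hMmax : ∀ M' : A.Subgraph, M'.IsMatching → M'.edgeSet.ncard ≤ M.edgeSet.ncard) :
    (∃ P, IsPacking ℒ Gx P ∧ P.card = (∑ i, opt i) + M.edgeSet.ncard) ∧
    (∀ P, IsPacking ℒ Gx P → P.card ≤ (∑ i, opt i) + M.edgeSet.ncard) := by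
  subst hGx
  exact ⟨exists_isPacking_card_eq hpar hedisj hL (fun i => (hopt i).1)
      (fun i j h => ((hA i j).1 h).2) hM,
    fun P hP => card_le_sum_add_ncard_of_isPacking hst hpar hedisj hser hL (fun i => (hopt i).2)
      (fun i j hij h => (hA i j).2 ⟨hij, h⟩) hMmax hP⟩

/-- Let `Gx = Hc 0 ∥ ⋯ ∥ Hc (c-1)` be a parallel composition (at a
`∥`-node `x` of a layered decomposition tree, so each child is a single edge or a series
composition), let `ℒ` be a list of cycles of length at most `4`, `opt i` the optimum
packing size inside `Hc i`, and `A` the auxiliary graph on `Fin c` in which `i j` is an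
edge iff some listed cycle inside `Gx` enters both `Hc i` and `Hc j` and is compatible
with optimal sub-solutions of both.  If `M` is a maximum matching of `A`, then the
optimum packing size inside `Gx` equals `(∑ i, opt i) + |M|`. -/
theorem parallel_node_packing_eq_sum_opt_add_matching
    [Fintype V] (Γ : SimpleGraph V) (s t : V) (hst : s ≠ t)
    (c : ℕ) (hc : 1 ≤ c) (Hc : Fin c → Γ.Subgraph)
    (hterm : ∀ i, s ∈ (Hc i).verts ∧ t ∈ (Hc i).verts)
    (hpar : ∀ i j, i ≠ j → (Hc i).verts ∩ (Hc j).verts = {s, t})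
    (hedisj : ∀ i j, i ≠ j → (Hc i).edgeSet ∩ (Hc j).edgeSet = ∅)
    (hser : ∀ i, SeriesOrEdge (Hc i) s t)
    (Gx : Γ.Subgraph) (hGx : Gx = ⨆ i, Hc i)
    (hclosed : ∀ u ∈ Gx.verts, u ≠ s → u ≠ t → ∀ w : V, Γ.Adj u w →
        s(u, w) ∈ Gx.edgeSet)
    (ℒ : Finset (Finset (Sym2 V))) (hL : ∀ E ∈ ℒ, IsShortCycleEdges Γ E)
    (opt : Fin c → ℕ)
    (hopt : ∀ i, (∃ P, IsPacking ℒ (Hc i) P ∧ P.card = opt i) ∧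
        ∀ P, IsPacking ℒ (Hc i) P → P.card ≤ opt i)
    (A : SimpleGraph (Fin c))
    (hA : ∀ i j, A.Adj i j ↔ i ≠ j ∧ ∃ Cc ∈ ℒ,
        (Cc : Set (Sym2 V)) ⊆ Gx.edgeSet ∧ Enters (Hc i) Cc ∧ Enters (Hc j) Cc ∧
        (∃ P, IsPacking ℒ (Hc i) P ∧ P.card = opt i ∧ ∀ E ∈ P, Disjoint E Cc) ∧
        (∃ P, IsPacking ℒ (Hc j) P ∧ P.card = opt j ∧ ∀ E ∈ P, Disjoint E Cc))
    (M : A.Subgraph) (hM : M.IsMatching)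
    (hMmax : ∀ M' : A.Subgraph, M'.IsMatching → M'.edgeSet.ncard ≤ M.edgeSet.ncard) :
    (∃ P, IsPacking ℒ Gx P ∧ P.card = (∑ i, opt i) + M.edgeSet.ncard) ∧
    (∀ P, IsPacking ℒ Gx P → P.card ≤ (∑ i, opt i) + M.edgeSet.ncard) :=
  parallel_node_packing_eq_sum_opt_add_matching_general Γ s t hst c Hc hpar hedisj hser Gx hGx ℒ hL
    opt hopt A hA M hM hMmax
end

section
/- Let G be obtained from a graph G₀ by subdividing every edge exactly twice (replacing each edge by a path with two internal vertices). Then G₀ has an independent set of size k if and only if G has an independent set of size k + |E(G₀)|. -/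
/-!
An independent set `S₀` of `G₀` misses an endpoint `w e` of every edge `e`; adding, for each
edge, the subdivision vertex of `e` next to `w e` gives an independent set of `G` that is larger
by `|E(G₀)|`. Conversely, an independent set of `G` of size `k + |E(G₀)|` contains at most one
subdivision vertex per edge, and none on the `b` edges both of whose endpoints it contains, so it
contains at least `k + b` original vertices; deleting one endpoint of each of those `b` edges
leaves an independent set of `G₀` of size at least `k`.
-/

open SimpleGraph Finset

/-- The graph obtained from `G₀` by subdividing every edge exactly twice: each edge
`{u, v}` is replaced by a path `u – (e,u) – (e,v) – v`, where `(e,u)` and `(e,v)` are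
the two new internal vertices of the edge `e = {u,v}`. -/
def subdivideTwice {V₀ : Type*} (G₀ : SimpleGraph V₀) :
    SimpleGraph (V₀ ⊕ {p : Sym2 V₀ × V₀ // p.1 ∈ G₀.edgeSet ∧ p.2 ∈ p.1}) :=
  SimpleGraph.fromRel fun a b =>
    match a, b with
    | Sum.inl u, Sum.inr ⟨(_, w), _⟩ => u = w
    | Sum.inr ⟨(e, u), _⟩, Sum.inr ⟨(e', u'), _⟩ => e = e' ∧ u ≠ u'
    | _, _ => False

namespace SimpleGraph

variable {V : Type*} (G : SimpleGraph V)

theorem isIndepSet_iff_forall_not_adj {s : Set V} :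
    G.IsIndepSet s ↔ ∀ u ∈ s, ∀ v ∈ s, ¬ G.Adj u v :=
  ⟨fun h _ hu _ hv huv => h hu hv huv.ne huv, fun h _ hu _ hv _ => h _ hu _ hv⟩

theorem exists_isIndepSet_subset_card_sub_le [Fintype V] [DecidableEq V] [DecidableRel G.Adj]
    (s : Finset V) :
    ∃ t ⊆ s, G.IsIndepSet t ∧ #s - #(G.edgeFinset ∩ s.sym2) ≤ #t := by
  set T := (G.edgeFinset ∩ s.sym2).image fun e => e.out.1
  refine ⟨s \ T, sdiff_subset, ?_, ?_⟩
  · intro u hu v hv _ huv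
    simp only [coe_sdiff, Set.mem_sdiff, mem_coe] at hu hv
    have hT : (s(u, v)).out.1 ∈ T :=
      mem_image_of_mem _ (mem_inter.mpr ⟨G.mem_edgeFinset.mpr huv, mk_mem_sym2_iff.mpr ⟨hu.1, hv.1⟩⟩)
    rcases Sym2.mem_iff.mp (Sym2.out_fst_mem s(u, v)) with h | h
    · exact hu.2 (h ▸ hT)
    · exact hv.2 (h ▸ hT)
  · have := le_card_sdiff T s
    have : #T ≤ #(G.edgeFinset ∩ s.sym2) := card_image_le
    omega

end SimpleGraph

section Subdivision

variable {V₀ : Type*} {G₀ : SimpleGraph V₀}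

abbrev SubdivisionVertex (G₀ : SimpleGraph V₀) :=
  {p : Sym2 V₀ × V₀ // p.1 ∈ G₀.edgeSet ∧ p.2 ∈ p.1}

theorem subdivideTwice_not_adj_inl_inl (u v : V₀) :
    ¬ (subdivideTwice G₀).Adj (.inl u) (.inl v) := by
  simp [subdivideTwice]

theorem subdivideTwice_adj_inl_inr (u : V₀) (p : SubdivisionVertex G₀) :
    (subdivideTwice G₀).Adj (.inl u) (.inr p) ↔ u = p.1.2 := by
  obtain ⟨⟨e, w⟩, h⟩ := p
  simp [subdivideTwice]

theorem subdivideTwice_adj_inr_inl (p : SubdivisionVertex G₀) (u : V₀) :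
    (subdivideTwice G₀).Adj (.inr p) (.inl u) ↔ u = p.1.2 := by
  rw [adj_comm, subdivideTwice_adj_inl_inr]

theorem subdivideTwice_adj_inr_inr (p q : SubdivisionVertex G₀) :
    (subdivideTwice G₀).Adj (.inr p) (.inr q) ↔ p.1.1 = q.1.1 ∧ p ≠ q := by
  obtain ⟨⟨e, w⟩, h⟩ := p
  obtain ⟨⟨e', w'⟩, h'⟩ := q
  simp only [subdivideTwice, fromRel_adj, ne_eq, Sum.inr.injEq, Subtype.mk.injEq, Prod.mk.injEq]
  grind

theorem isIndepSet_subdivideTwice_disjSum_iff {s : Finset V₀} {t : Finset (SubdivisionVertex G₀)} :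
    (subdivideTwice G₀).IsIndepSet (s.disjSum t : Set _) ↔
      (∀ p ∈ t, p.1.2 ∉ s) ∧ Set.InjOn (fun p => p.1.1) (t : Set (SubdivisionVertex G₀)) := by
  simp only [isIndepSet_iff_forall_not_adj, mem_coe, Sum.forall, inl_mem_disjSum,
    inr_mem_disjSum, subdivideTwice_not_adj_inl_inl, subdivideTwice_adj_inl_inr,
    subdivideTwice_adj_inr_inl, subdivideTwice_adj_inr_inr, Set.InjOn]
  grind

theorem exists_isIndepSet_subdivideTwice_card_eq [Fintype V₀] [DecidableEq V₀]
    [DecidableRel G₀.Adj] {s : Finset V₀} (hs : G₀.IsIndepSet s) :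
    ∃ S : Finset (V₀ ⊕ SubdivisionVertex G₀),
      #S = #s + #G₀.edgeFinset ∧ (subdivideTwice G₀).IsIndepSet S := by
  have hw (e : G₀.edgeSet) : ∃ w ∈ (e : Sym2 V₀), w ∉ s := by
    obtain ⟨w, hws, hwe⟩ := IsIndepSet.nonempty_mem_compl_mem_edge G₀ hs e.2
    exact ⟨w, hwe, hws⟩
  choose w hwe hws using hw
  let f : G₀.edgeSet ↪ SubdivisionVertex G₀ :=
    ⟨fun e => ⟨(e, w e), e.2, hwe e⟩, fun e e' h => Subtype.ext (congrArg (·.1.1) h)⟩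
  refine ⟨s.disjSum (univ.map f), by simp [edgeFinset_card], ?_⟩
  refine isIndepSet_subdivideTwice_disjSum_iff.mpr ⟨?_, ?_⟩
  · simp only [mem_map, mem_univ, true_and]
    rintro _ ⟨e, rfl⟩
    exact hws e
  · simp only [coe_map, coe_univ, Set.image_univ]
    rintro _ ⟨e, rfl⟩ _ ⟨e', rfl⟩ h
    rw [show e = e' from Subtype.ext h]

theorem card_toRight_add_card_inter_sym2_le [Fintype V₀] [DecidableEq V₀]
    [DecidableRel G₀.Adj] {S : Finset (V₀ ⊕ SubdivisionVertex G₀)}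
    (hS : (subdivideTwice G₀).IsIndepSet S) :
    #S.toRight + #(G₀.edgeFinset ∩ S.toLeft.sym2) ≤ #G₀.edgeFinset := by
  rw [← toLeft_disjSum_toRight (u := S), isIndepSet_subdivideTwice_disjSum_iff] at hS
  obtain ⟨hout, hinj⟩ := hS
  have hmaps : Set.MapsTo (fun p : SubdivisionVertex G₀ => p.1.1) S.toRight
      (G₀.edgeFinset \ S.toLeft.sym2 : Finset _) := by
    intro p hp
    simp only [coe_sdiff, Set.mem_sdiff, mem_coe, mem_edgeFinset, mem_sym2_iff, not_forall]
    exact ⟨p.2.1, p.1.2, p.2.2, hout p hp⟩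
  have := card_le_card_of_injOn _ hmaps hinj
  have := card_sdiff_add_card_inter G₀.edgeFinset S.toLeft.sym2
  omega

end Subdivision

/-- If `G` is obtained from `G₀` by subdividing every edge exactly
twice, then `G₀` has an independent set of size `k` iff `G` has an independent set of
size `k + |E(G₀)|`. -/
theorem subdivideTwice_independent_set_iff
    {V₀ : Type*} [Fintype V₀] [DecidableEq V₀]
    (G₀ : SimpleGraph V₀) [DecidableRel G₀.Adj] (k : ℕ) :
    (∃ S : Finset V₀, S.card = k ∧ ∀ u ∈ S, ∀ v ∈ S, ¬ G₀.Adj u v) ↔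
    (∃ S : Finset (V₀ ⊕ {p : Sym2 V₀ × V₀ // p.1 ∈ G₀.edgeSet ∧ p.2 ∈ p.1}),
        S.card = k + G₀.edgeFinset.card ∧
        ∀ u ∈ S, ∀ v ∈ S, ¬ (subdivideTwice G₀).Adj u v) := by
  simp only [← mem_coe, ← isIndepSet_iff_forall_not_adj]
  constructor
  · rintro ⟨s, rfl, hs⟩
    exact exists_isIndepSet_subdivideTwice_card_eq hs
  · rintro ⟨S, hcard, hS⟩
    obtain ⟨t, -, ht, hcard_t⟩ := G₀.exists_isIndepSet_subset_card_sub_le S.toLeft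
    have := card_toRight_add_card_inter_sym2_le hS
    have := card_toLeft_add_card_toRight (u := S)
    obtain ⟨s, hst, rfl⟩ := exists_subset_card_eq (s := t) (n := k) (by omega)
    exact ⟨s, rfl, ht.mono hst⟩
end
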